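/- arXiv:2003.07234 — 7 statements merged into one kernel-verified Lean document; each statement's English description precedes it below -/
import Mathlib

section
/- Let d ≥ 2 and suppose the Korobov cubature formula P_m(·,a) is exact on T(L,d) for some natural number L ≥ 2. Then there exists a constant C_1(d) > 0 (depending only on d) such that the dispersion of the Korobov point set K_m(a) satisfies disp(K_m(a)) ≤ C_1(d) · L^{-1}. -/
open MeasureTheory Real

noncomputable section

/-- The univariate smooth hat function `h^r_u`. -/
def hFun (u : ℝ) : ℕ → ℝ → ℝ
  | 0 => fun _ => 0
  | 1 => fun x => Set.indicator (Set.Ico (-(u / 2)) (u / 2)) (fun _ => (1 : ℝ)) x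
  | (r + 2) => fun x => ∫ y : ℝ, hFun u (r + 1) (x - y) * hFun u 1 y

/-- The multivariate function `h^r_B` for the box with center `z` and parameter vector `u`. -/
def hBox (d r : ℕ) (z u : Fin d → ℝ) (x : Fin d → ℝ) : ℝ :=
  ∏ j, hFun (u j) r (x j - z j)

/-- The box `B = ∏_j [z_j - r u_j/2, z_j + r u_j/2)`. -/
def boxSet (d r : ℕ) (z u : Fin d → ℝ) : Set (Fin d → ℝ) :=
  Set.univ.pi fun j => Set.Ico (z j - r * u j / 2) (z j + r * u j / 2)

/-- The unit cube `[0,1)^d`. -/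
def unitCube (d : ℕ) : Set (Fin d → ℝ) :=
  Set.univ.pi fun _ => Set.Ico (0 : ℝ) 1

/-- Periodization of a multivariate function over `ℤ^d`. -/
def periodize (d : ℕ) (f : (Fin d → ℝ) → ℝ) (x : Fin d → ℝ) : ℝ :=
  ∑' m : Fin d → ℤ, f fun j => (m j : ℝ) + x j

/-- The error of the equal-weight cubature with nodes `ξ 1, …, ξ m` applied to the
periodization of `h^r_B` shifted by `z`. -/
def errFun (d r m : ℕ) (ξ : ℕ → Fin d → ℝ) (zB u : Fin d → ℝ) (z : Fin d → ℝ) : ℝ :=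
  (∫ x in unitCube d, periodize d (hBox d r zB u) fun j => x j - z j) -
    (m : ℝ)⁻¹ * ∑ μ ∈ Finset.Icc 1 m, periodize d (hBox d r zB u) fun j => ξ μ j - z j

/-- The hyperbolic cross `Γ(N,d)`. -/
def hyperbolicCross (d : ℕ) (N : ℝ) : Set (Fin d → ℤ) :=
  {k | (∏ j, max |(k j : ℝ)| 1) ≤ N}

/-- The exponential `e^{2πi(k,x)}`. -/
def expFun (d : ℕ) (k : Fin d → ℤ) (x : Fin d → ℝ) : ℂ :=
  Complex.exp (2 * Real.pi * Complex.I * ∑ j, (k j : ℂ) * (x j : ℂ))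

/-- The space `T(N,d)` of trigonometric polynomials with frequencies in `Γ(N,d)`. -/
def TSpace (d : ℕ) (N : ℝ) : Submodule ℂ ((Fin d → ℝ) → ℂ) :=
  Submodule.span ℂ (expFun d '' hyperbolicCross d N)

/-- The nodes `y^μ` of the Korobov cubature formula `P_m(·,a)`. -/
def korobovNode (d m : ℕ) (a : Fin d → ℤ) (μ : ℕ) : Fin d → ℝ :=
  fun j => Int.fract ((μ : ℝ) * (a j : ℝ) / (m : ℝ))

/-- The Korobov cubature formula `P_m(f,a)`. -/
def korobovSum (d m : ℕ) (a : Fin d → ℤ) (f : (Fin d → ℝ) → ℂ) : ℂ :=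
  (m : ℂ)⁻¹ * ∑ μ ∈ Finset.Icc 1 m, f (korobovNode d m a μ)

/-- Exactness of the Korobov cubature formula on `T(N,d)`. -/
def IsExact (d m : ℕ) (a : Fin d → ℤ) (N : ℝ) : Prop :=
  ∀ f ∈ TSpace d N, korobovSum d m a f = ∫ x in unitCube d, f x

/-- The Fibonacci numbers with `b 0 = b 1 = 1`. -/
def fibb : ℕ → ℕ
  | 0 => 1
  | 1 => 1
  | (n + 2) => fibb (n + 1) + fibb n

/-- The points of the Fibonacci point set `𝓕_n`. -/
def fibNode (n : ℕ) (μ : ℕ) : Fin 2 → ℝ :=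
  ![(μ : ℝ) / (fibb n : ℝ), Int.fract ((μ : ℝ) * (fibb (n - 1) : ℝ) / (fibb n : ℝ))]

/-!
Suppose the box `∏ [x_j, y_j) ⊆ [0,1)^d`, of side lengths `h_j`, contains no Korobov node. In
each coordinate centre the nonnegative kernel `K_j(t) = |∑_{i ≤ n_j} sin((i+1)π/(n_j+2)) e(it)|²`
at the midpoint `c_j` and put `g_j = (1 - cos πh_j) K_j`, `f_j = (cos 2π(t - c_j) - cos πh_j) K_j`.
Then `0 ≤ g_j`, `f_j ≤ g_j`, and `f_j ≤ 0` on `[0,1) \ [x_j, y_j)`, so the trigonometric polynomial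
`F = ∑_j f_j ∏_{i ≠ j} g_i - (d - 1) ∏_i g_i` is `≤ 0` at every node, while its mean is positive
as soon as `d (1 - cos (π/(n_j+2))) < 1 - cos πh_j`, which holds for `n_j = ⌈πd/h_j⌉`. Since `F`
has frequencies in `Γ(∏ (n_j + 1), d)` and `∏ (n_j + 1) ≤ (6d)^d / ∏ h_j`, exactness on
`T(L, d)` is impossible unless `∏ h_j ≤ (6d)^d / L`.
-/

lemma Continuous.integrableOn_Ico {E : Type*} [NormedAddCommGroup E] {f : ℝ → E}
    (hf : Continuous f) {a b : ℝ} : IntegrableOn f (Set.Ico a b) :=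
  hf.integrableOn_Icc.mono_set Set.Ico_subset_Icc_self

def expChar (k : ℤ) (t : ℝ) : ℂ := Complex.exp (2 * π * Complex.I * (k * t))

section Characters

open Complex

lemma expChar_add (k l : ℤ) (t : ℝ) : expChar (k + l) t = expChar k t * expChar l t := by
  simp only [expChar, ← Complex.exp_add]
  push_cast
  ring_nf

lemma expChar_apply_add (k : ℤ) (t s : ℝ) : expChar k (t + s) = expChar k t * expChar k s := by
  simp only [expChar, ← Complex.exp_add]
  push_cast
  ring_nf

lemma expChar_zero (t : ℝ) : expChar 0 t = 1 := by simp [expChar]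

lemma expChar_apply_one (k : ℤ) : expChar k 1 = 1 := by
  rw [expChar, ← Complex.exp_int_mul_two_pi_mul_I k]
  push_cast
  ring_nf

lemma conj_expChar (k : ℤ) (t : ℝ) : (starRingEnd ℂ) (expChar k t) = expChar (-k) t := by
  rw [expChar, expChar, ← Complex.exp_conj]
  simp only [map_mul, conj_I, map_ofNat, conj_ofReal, map_intCast]
  push_cast
  ring_nf

@[fun_prop]
lemma continuous_expChar (k : ℤ) : Continuous (expChar k) := by
  unfold expChar; fun_prop

lemma periodic_expChar (k : ℤ) : Function.Periodic (expChar k) 1 := fun t => by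
  rw [expChar_apply_add, expChar_apply_one, mul_one]

lemma two_mul_cos_eq_expChar (t : ℝ) :
    ((2 * Real.cos (2 * π * t) : ℝ) : ℂ) = expChar 1 t + expChar (-1) t := by
  rw [expChar, expChar, ofReal_mul, ofReal_cos, Complex.cos, ofReal_ofNat]
  push_cast
  ring_nf

lemma integral_expChar (k : ℤ) :
    ∫ t in Set.Ico (0 : ℝ) 1, expChar k t = if k = 0 then 1 else 0 := by
  split_ifs with hk
  · simp [hk, expChar_zero]
  have hc : 2 * π * I * k ≠ 0 := by simp [Real.pi_ne_zero, I_ne_zero, hk]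
  rw [integral_Ico_eq_integral_Ioo, ← integral_Ioc_eq_integral_Ioo,
    ← intervalIntegral.integral_of_le zero_le_one]
  simp_rw [expChar, ← mul_assoc]
  rw [integral_exp_mul_complex hc]
  have h1 := expChar_apply_one k
  rw [expChar, ← mul_assoc, ofReal_one, mul_one] at h1
  simp [h1]

lemma integral_sum_expChar {ι : Type*} (s : Finset ι) (c : ι → ℂ) (k : ι → ℤ) :
    ∫ t in Set.Ico (0 : ℝ) 1, ∑ a ∈ s, c a * expChar (k a) t =
      ∑ a ∈ s, if k a = 0 then c a else 0 := by
  rw [integral_finsetSum]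
  · refine Finset.sum_congr rfl fun a _ => ?_
    rw [integral_const_mul, integral_expChar]
    simp
  · exact fun a _ => (continuous_expChar _).integrableOn_Ico.const_mul _

lemma expFun_eq_prod (d : ℕ) (k : Fin d → ℤ) (x : Fin d → ℝ) :
    expFun d k x = ∏ j, expChar (k j) (x j) := by
  rw [expFun, Finset.mul_sum, Complex.exp_sum]
  rfl

end Characters

def trigPoly (s : Set ℤ) : Submodule ℂ (ℝ → ℂ) :=
  Submodule.span ℂ (expChar '' s)

section TrigPoly

open scoped Pointwise

variable {s s' : Set ℤ} {p q : ℝ → ℂ}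

lemma expChar_mem_trigPoly {k : ℤ} (hk : k ∈ s) : expChar k ∈ trigPoly s :=
  Submodule.subset_span ⟨k, hk, rfl⟩

lemma trigPoly_mono (h : s ⊆ s') : trigPoly s ≤ trigPoly s' :=
  Submodule.span_mono (Set.image_mono h)

lemma mul_mem_trigPoly (hp : p ∈ trigPoly s) (hq : q ∈ trigPoly s') :
    p * q ∈ trigPoly (s + s') := by
  have hmul := Submodule.mul_mem_mul hp hq
  rw [trigPoly, trigPoly, Submodule.span_mul_span] at hmul
  refine Submodule.span_mono ?_ hmul
  rintro _ ⟨_, ⟨k, hk, rfl⟩, _, ⟨l, hl, rfl⟩, rfl⟩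
  exact ⟨k + l, Set.add_mem_add hk hl, funext fun t => expChar_add k l t⟩

lemma comp_sub_mem_trigPoly (hp : p ∈ trigPoly s) (c : ℝ) :
    (fun t => p (t - c)) ∈ trigPoly s := by
  let shift : (ℝ → ℂ) →ₗ[ℂ] (ℝ → ℂ) :=
    { toFun := fun f t => f (t - c), map_add' := fun _ _ => rfl, map_smul' := fun _ _ => rfl }
  suffices trigPoly s ≤ (trigPoly s).comap shift from this hp
  refine Submodule.span_le.2 ?_
  rintro _ ⟨k, hk, rfl⟩
  have : shift (expChar k) = expChar k (-c) • expChar k :=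
    funext fun t => by simp [shift, sub_eq_add_neg, expChar_apply_add, mul_comm]
  simpa [this] using Submodule.smul_mem _ _ (expChar_mem_trigPoly hk)

end TrigPoly

lemma TSpace_mono {d : ℕ} {N M : ℝ} (h : N ≤ M) : TSpace d N ≤ TSpace d M :=
  Submodule.span_mono (Set.image_mono fun _ hk => le_trans hk h)

lemma prod_mem_TSpace {d : ℕ} (N : Fin d → ℕ) (p : Fin d → ℝ → ℂ)
    (hp : ∀ j, p j ∈ trigPoly (Set.Icc (-(N j : ℤ)) (N j))) :
    (fun x => ∏ j, p j (x j)) ∈ TSpace d (∏ j, max (N j : ℝ) 1) := by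
  choose l hl hlp using fun j => (Finsupp.mem_span_image_iff_linearCombination ℂ).1 (hp j)
  have hexpand : (fun x => ∏ j, p j (x j)) =
      ∑ g ∈ Fintype.piFinset fun j => (l j).support, (∏ j, l j (g j)) • expFun d g := by
    funext x
    simp only [← hlp, Finsupp.linearCombination_apply, Finsupp.sum, Finset.sum_apply,
      Pi.smul_apply, smul_eq_mul, Finset.prod_univ_sum, expFun_eq_prod, Finset.prod_mul_distrib]
  rw [hexpand]
  refine Submodule.sum_mem _ fun g hg => Submodule.smul_mem _ _ (Submodule.subset_span ⟨g, ?_, rfl⟩)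
  show (∏ j, max |(g j : ℝ)| 1) ≤ _
  refine Finset.prod_le_prod (fun j _ => by positivity) fun j _ => max_le_max_right 1 ?_
  have hgj := hl j (Fintype.mem_piFinset.1 hg j)
  rw [Set.mem_Icc] at hgj
  rw [← Int.cast_abs, ← Int.cast_natCast]
  exact Int.cast_le.2 (abs_le.2 hgj)

lemma restrict_unitCube (d : ℕ) :
    (volume : Measure (Fin d → ℝ)).restrict (unitCube d) =
      Measure.pi fun _ => volume.restrict (Set.Ico (0 : ℝ) 1) := by
  rw [unitCube, volume_pi, Measure.restrict_pi_pi]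

lemma integral_unitCube_prod {d : ℕ} (f : Fin d → ℝ → ℝ) :
    ∫ x in unitCube d, ∏ j, f j (x j) = ∏ j, ∫ t in Set.Ico (0 : ℝ) 1, f j t := by
  rw [restrict_unitCube, integral_fintype_prod_eq_prod]

lemma integrableOn_unitCube_prod {d : ℕ} {f : Fin d → ℝ → ℝ}
    (hf : ∀ j, IntegrableOn (f j) (Set.Ico 0 1)) :
    IntegrableOn (fun x => ∏ j, f j (x j)) (unitCube d) := by
  rw [IntegrableOn, restrict_unitCube]
  exact Integrable.fintype_prod hf

lemma IsExact.korobov_mean_eq_integral {d m : ℕ} {a : Fin d → ℤ} {N : ℝ} (hex : IsExact d m a N)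
    {Φ : (Fin d → ℝ) → ℝ} (hΦ : (fun x => (Φ x : ℂ)) ∈ TSpace d N) :
    (m : ℝ)⁻¹ * ∑ μ ∈ Finset.Icc 1 m, Φ (korobovNode d m a μ) = ∫ x in unitCube d, Φ x := by
  have h := hex _ hΦ
  rw [korobovSum, integral_complex_ofReal, ← Complex.ofReal_natCast, ← Complex.ofReal_inv,
    ← Complex.ofReal_sum, ← Complex.ofReal_mul] at h
  exact_mod_cast h

section MinorantCombination

open Finset Function

variable {ι : Type*} [Fintype ι] [DecidableEq ι]

def minorantComb (f g : ι → ℝ) : ℝ :=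
  ∑ j, ∏ i, update g j (f j) i - (Fintype.card ι - 1) * ∏ i, g i

lemma prod_update_eq_mul_prod_erase (g : ι → ℝ) (j : ι) (v : ℝ) :
    ∏ i, update g j v i = v * ∏ i ∈ univ.erase j, g i := by
  rw [prod_update_of_mem (mem_univ j), sdiff_singleton_eq_erase]

lemma minorantComb_nonpos {f g : ι → ℝ} (hg : ∀ i, 0 ≤ g i) (hfg : ∀ i, f i ≤ g i) {j : ι}
    (hj : f j ≤ 0) : minorantComb f g ≤ 0 := by
  have hrest : ∀ i, 0 ≤ ∏ k ∈ univ.erase i, g k := fun i => prod_nonneg fun k _ => hg k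
  have hterm : ∀ i, ∏ k, update g i (f i) k ≤ ∏ k, g k := fun i => by
    rw [prod_update_eq_mul_prod_erase, ← mul_prod_erase univ g (mem_univ i)]
    exact mul_le_mul_of_nonneg_right (hfg i) (hrest i)
  have hterm_j : ∏ k, update g j (f j) k ≤ 0 := by
    rw [prod_update_eq_mul_prod_erase]
    exact mul_nonpos_of_nonpos_of_nonneg hj (hrest j)
  have hothers := sum_le_sum fun i (_ : i ∈ univ.erase j) => hterm i
  rw [sum_const, card_erase_of_mem (mem_univ j), card_univ, nsmul_eq_mul,
    Nat.cast_sub (Fintype.card_pos_iff.2 ⟨j⟩), Nat.cast_one] at hothers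
  rw [minorantComb, ← add_sum_erase univ _ (mem_univ j)]
  linarith

lemma minorantComb_pos [Nonempty ι] {f g : ι → ℝ} (hg : ∀ i, 0 < g i)
    (hfg : ∀ i, (Fintype.card ι - 1) * g i < Fintype.card ι * f i) :
    0 < minorantComb f g := by
  have hterm : ∀ i, (Fintype.card ι - 1) * ∏ k, g k < Fintype.card ι * ∏ k, update g i (f i) k :=
    fun i => by
      rw [prod_update_eq_mul_prod_erase, ← mul_prod_erase univ g (mem_univ i), ← mul_assoc,
        ← mul_assoc]
      exact mul_lt_mul_of_pos_right (hfg i) (prod_pos fun k _ => hg k)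
  have hsum := sum_lt_sum_of_nonempty univ_nonempty fun i (_ : i ∈ univ) => hterm i
  rw [sum_const, card_univ, nsmul_eq_mul, ← mul_sum] at hsum
  have hcard : (0 : ℝ) < Fintype.card ι := Nat.cast_pos.2 Fintype.card_pos
  rw [minorantComb, sub_pos]
  nlinarith

lemma minorantComb_comp {α : Type*} (f g : ι → α → ℝ) (x : ι → α) :
    minorantComb (fun i => f i (x i)) (fun i => g i (x i)) =
      ∑ j, ∏ i, update g j (f j) i (x i) - (Fintype.card ι - 1) * ∏ i, g i (x i) := by
  simp only [minorantComb, apply_update (fun k (h : α → ℝ) => h (x k))]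

end MinorantCombination

section MinorantOnCube

open Function

variable {d : ℕ} {f g : Fin d → ℝ → ℝ}

lemma integral_minorantComb (hf : ∀ i, IntegrableOn (f i) (Set.Ico 0 1))
    (hg : ∀ i, IntegrableOn (g i) (Set.Ico 0 1)) :
    ∫ x in unitCube d, minorantComb (fun i => f i (x i)) (fun i => g i (x i)) =
      minorantComb (fun i => ∫ t in Set.Ico (0 : ℝ) 1, f i t)
        (fun i => ∫ t in Set.Ico (0 : ℝ) 1, g i t) := by
  have hupdate : ∀ j i, IntegrableOn (update g j (f j) i) (Set.Ico 0 1) := fun j i => by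
    rcases eq_or_ne i j with rfl | hij
    · simpa using hf i
    · simpa [hij] using hg i
  simp_rw [minorantComb_comp]
  rw [integral_sub (integrable_finsetSum _ fun j _ => integrableOn_unitCube_prod (hupdate j))
    ((integrableOn_unitCube_prod hg).const_mul _), integral_finsetSum _
    fun j _ => integrableOn_unitCube_prod (hupdate j), integral_const_mul]
  simp only [integral_unitCube_prod, minorantComb,
    apply_update (fun _ (h : ℝ → ℝ) => ∫ t in Set.Ico (0 : ℝ) 1, h t)]

lemma minorantComb_mem_TSpace (N : Fin d → ℕ)
    (hf : ∀ i, (fun t => (f i t : ℂ)) ∈ trigPoly (Set.Icc (-(N i : ℤ)) (N i)))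
    (hg : ∀ i, (fun t => (g i t : ℂ)) ∈ trigPoly (Set.Icc (-(N i : ℤ)) (N i))) :
    (fun x => (minorantComb (fun i => f i (x i)) (fun i => g i (x i)) : ℂ)) ∈
      TSpace d (∏ i, max (N i : ℝ) 1) := by
  have hprod : ∀ h : Fin d → ℝ → ℝ,
      (∀ i, (fun t => (h i t : ℂ)) ∈ trigPoly (Set.Icc (-(N i : ℤ)) (N i))) →
      (fun x => ((∏ i, h i (x i) : ℝ) : ℂ)) ∈ TSpace d (∏ i, max (N i : ℝ) 1) := fun h hh => by
    simpa using prod_mem_TSpace N (fun i t => (h i t : ℂ)) hh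
  have hupdate : ∀ j i, (fun t => (update g j (f j) i t : ℂ)) ∈
      trigPoly (Set.Icc (-(N i : ℤ)) (N i)) := fun j i => by
    rcases eq_or_ne i j with rfl | hij
    · simpa using hf i
    · simpa [hij] using hg i
  have hexpand : (fun x => (minorantComb (fun i => f i (x i)) (fun i => g i (x i)) : ℂ)) =
      ∑ j, (fun x : Fin d → ℝ => ((∏ i, update g j (f j) i (x i) : ℝ) : ℂ)) -
        ((d : ℂ) - 1) • fun x : Fin d → ℝ => ((∏ i, g i (x i) : ℝ) : ℂ) := by
    funext x
    simp [minorantComb_comp]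
  rw [hexpand]
  exact sub_mem (Submodule.sum_mem _ fun j _ => hprod _ (hupdate j))
    (Submodule.smul_mem _ _ (hprod g hg))

end MinorantOnCube

lemma integral_Ico_comp_sub_of_periodic {f : ℝ → ℝ} (hf : Function.Periodic f 1) (c : ℝ) :
    ∫ t in Set.Ico (0 : ℝ) 1, f (t - c) = ∫ t in Set.Ico (0 : ℝ) 1, f t := by
  simp only [integral_Ico_eq_integral_Ioo, ← integral_Ioc_eq_integral_Ioo,
    ← intervalIntegral.integral_of_le zero_le_one]
  rw [intervalIntegral.integral_comp_sub_right, show (1 : ℝ) - c = 0 - c + 1 by ring,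
    hf.intervalIntegral_add_eq (0 - c) 0, zero_add]

section TrigSum

open Finset

def trigSum (b : ℕ → ℝ) (n : ℕ) (t : ℝ) : ℂ :=
  ∑ i ∈ range (n + 1), (b i : ℂ) * expChar i t

variable (b : ℕ → ℝ) (n : ℕ)

lemma ofReal_normSq_trigSum (t : ℝ) :
    ((Complex.normSq (trigSum b n t) : ℝ) : ℂ) =
      ∑ i ∈ range (n + 1), ∑ l ∈ range (n + 1),
        ((b i * b l : ℝ) : ℂ) * expChar ((i : ℤ) - l) t := by
  rw [← Complex.mul_conj, trigSum, map_sum, sum_mul_sum]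
  refine sum_congr rfl fun i _ => sum_congr rfl fun l _ => ?_
  rw [map_mul, Complex.conj_ofReal, conj_expChar, sub_eq_add_neg, expChar_add]
  push_cast
  ring

lemma continuous_normSq_trigSum : Continuous fun t => Complex.normSq (trigSum b n t) := by
  unfold trigSum
  fun_prop

lemma periodic_normSq_trigSum : Function.Periodic (fun t => Complex.normSq (trigSum b n t)) 1 :=
  fun t => by simp only [trigSum, periodic_expChar _ t]

lemma normSq_trigSum_mem_trigPoly :
    (fun t => ((Complex.normSq (trigSum b n t) : ℝ) : ℂ)) ∈ trigPoly (Set.Icc (-(n : ℤ)) n) := by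
  have hexpand : (fun t => ((Complex.normSq (trigSum b n t) : ℝ) : ℂ)) =
      ∑ i ∈ range (n + 1), ∑ l ∈ range (n + 1),
        ((b i * b l : ℝ) : ℂ) • expChar ((i : ℤ) - l) := by
    funext t
    simp [ofReal_normSq_trigSum]
  rw [hexpand]
  refine Submodule.sum_mem _ fun i hi => Submodule.sum_mem _ fun l hl =>
    Submodule.smul_mem _ _ (expChar_mem_trigPoly ?_)
  rw [mem_range] at hi hl
  constructor <;> omega

lemma integral_normSq_trigSum :
    ∫ t in Set.Ico (0 : ℝ) 1, Complex.normSq (trigSum b n t) = ∑ i ∈ range (n + 1), b i ^ 2 := by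
  apply Complex.ofReal_injective
  rw [← integral_complex_ofReal]
  simp_rw [ofReal_normSq_trigSum, ← sum_product']
  rw [integral_sum_expChar, sum_product]
  push_cast
  refine sum_congr rfl fun i hi => ?_
  simp_rw [sub_eq_zero, Nat.cast_inj]
  rw [sum_ite_eq, if_pos hi, sq]

lemma ofReal_cos_mul_normSq_trigSum (t : ℝ) :
    ((cos (2 * π * t) * Complex.normSq (trigSum b n t) : ℝ) : ℂ) =
      ∑ x ∈ ({1, -1} : Finset ℤ) ×ˢ (range (n + 1) ×ˢ range (n + 1)),
        ((b x.2.1 * b x.2.2 / 2 : ℝ) : ℂ) * expChar (x.1 + x.2.1 - x.2.2) t := by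
  have hcos : (cos (2 * π * t) : ℂ) = (expChar 1 t + expChar (-1) t) / 2 := by
    rw [← two_mul_cos_eq_expChar]
    push_cast
    ring
  rw [sum_product, sum_pair (show (1 : ℤ) ≠ -1 by decide), sum_product, sum_product,
    ← sum_add_distrib, Complex.ofReal_mul, ofReal_normSq_trigSum, mul_sum]
  refine sum_congr rfl fun i _ => ?_
  rw [← sum_add_distrib, mul_sum]
  refine sum_congr rfl fun l _ => ?_
  simp only [add_sub_assoc, expChar_add, hcos]
  push_cast
  ring

lemma integral_cos_mul_normSq_trigSum :
    ∫ t in Set.Ico (0 : ℝ) 1, cos (2 * π * t) * Complex.normSq (trigSum b n t) =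
      ∑ i ∈ range n, b i * b (i + 1) := by
  apply Complex.ofReal_injective
  rw [← integral_complex_ofReal]
  simp_rw [ofReal_cos_mul_normSq_trigSum]
  have hup : ∀ i l : ℕ, (1 : ℤ) + i - l = 0 ↔ l = i + 1 := by omega
  have hdown : ∀ i l : ℕ, (-1 : ℤ) + i - l = 0 ↔ i = l + 1 := by omega
  have hshift : ∀ f : ℕ → ℂ,
      ∑ i ∈ range (n + 1), (if i + 1 ∈ range (n + 1) then f i else 0) = ∑ i ∈ range n, f i := by
    intro f
    rw [← sum_filter]
    congr 1
    ext i
    simp only [mem_filter, mem_range]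
    omega
  rw [integral_sum_expChar, sum_product, sum_pair (show (1 : ℤ) ≠ -1 by decide), sum_product,
    sum_product]
  simp only [hup, hdown, sum_ite_eq', hshift]
  rw [sum_comm]
  simp only [sum_ite_eq', hshift, ← sum_add_distrib]
  push_cast
  refine sum_congr rfl fun i _ => ?_
  ring

end TrigSum

section SineKernel

open Finset

lemma sum_sin_mul_sin_succ {θ : ℝ} (n : ℕ) (hθ : sin ((n + 2) * θ) = 0) :
    ∑ i ∈ range n, sin ((i + 1) * θ) * sin ((i + 2) * θ) =
      cos θ * ∑ i ∈ range (n + 1), sin ((i + 1) * θ) ^ 2 := by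
  have hrec : ∀ i : ℕ, 2 * cos θ * sin ((i + 1) * θ) =
      sin ((i + 2) * θ) + sin (i * θ) := fun i => by
    rw [show ((i : ℝ) + 2) * θ = (i + 1) * θ + θ by ring,
      show (i : ℝ) * θ = (i + 1) * θ - θ by ring, Real.sin_add, Real.sin_sub]
    ring
  have hup : ∑ i ∈ range (n + 1), sin ((i + 1) * θ) * sin ((i + 2) * θ) =
      ∑ i ∈ range n, sin ((i + 1) * θ) * sin ((i + 2) * θ) := by
    rw [sum_range_succ, hθ, mul_zero, add_zero]
  have hdown : ∑ i ∈ range (n + 1), sin ((i + 1) * θ) * sin (i * θ) =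
      ∑ i ∈ range n, sin ((i + 1) * θ) * sin ((i + 2) * θ) := by
    rw [sum_range_succ', Nat.cast_zero, zero_mul, Real.sin_zero, mul_zero, add_zero]
    refine sum_congr rfl fun i _ => ?_
    push_cast
    ring_nf
  have hsum : 2 * cos θ * ∑ i ∈ range (n + 1), sin ((i + 1) * θ) ^ 2 =
      ∑ i ∈ range (n + 1), sin ((i + 1) * θ) * sin ((i + 2) * θ) +
        ∑ i ∈ range (n + 1), sin ((i + 1) * θ) * sin (i * θ) := by
    rw [mul_sum, ← sum_add_distrib]
    refine sum_congr rfl fun i _ => ?_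
    linear_combination sin ((i + 1) * θ) * hrec i
  linarith

/-- The sine weights are the top eigenvector of the path graph on `n + 1` vertices
(`sum_sin_mul_sin_succ`), so the mean of `cos (2πt)` against this kernel is
`cos (π / (n + 2)) = 1 - O(n⁻²)`. -/
def sineKernel (n : ℕ) (t : ℝ) : ℝ :=
  Complex.normSq (trigSum (fun i => sin ((i + 1) * (π / (n + 2)))) n t)

variable (n : ℕ)

lemma integral_sineKernel_pos : 0 < ∫ t in Set.Ico (0 : ℝ) 1, sineKernel n t := by
  unfold sineKernel
  rw [integral_normSq_trigSum]
  refine sum_pos' (fun i _ => sq_nonneg _) ⟨0, by simp, ?_⟩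
  have : 0 < sin (π / (n + 2)) :=
    Real.sin_pos_of_pos_of_lt_pi (by positivity) (div_lt_self Real.pi_pos (by linarith))
  simpa using pow_pos this 2

lemma integral_cos_mul_sineKernel :
    ∫ t in Set.Ico (0 : ℝ) 1, cos (2 * π * t) * sineKernel n t =
      cos (π / (n + 2)) * ∫ t in Set.Ico (0 : ℝ) 1, sineKernel n t := by
  have hθ : sin ((n + 2) * (π / (n + 2))) = 0 := by
    rw [mul_div_cancel₀ _ (by positivity), Real.sin_pi]
  unfold sineKernel
  rw [integral_cos_mul_normSq_trigSum, integral_normSq_trigSum,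
    ← sum_sin_mul_sin_succ n hθ]
  refine sum_congr rfl fun i _ => ?_
  push_cast
  ring_nf

lemma continuous_sineKernel : Continuous (sineKernel n) :=
  continuous_normSq_trigSum _ n

lemma periodic_sineKernel : Function.Periodic (sineKernel n) 1 :=
  periodic_normSq_trigSum _ n

lemma sineKernel_nonneg (t : ℝ) : 0 ≤ sineKernel n t :=
  Complex.normSq_nonneg _

lemma sineKernel_mem_trigPoly :
    (fun t => (sineKernel n t : ℂ)) ∈ trigPoly (Set.Icc (-(n : ℤ)) n) :=
  normSq_trigSum_mem_trigPoly _ n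

end SineKernel

def kernelFactor (n : ℕ) (A B c t : ℝ) : ℝ :=
  (A * cos (2 * π * (t - c)) + B) * sineKernel n (t - c)

section KernelFactor

open scoped Pointwise

variable (n : ℕ) (A B c : ℝ)

lemma continuous_kernelFactor : Continuous (kernelFactor n A B c) := by
  unfold kernelFactor
  have := continuous_sineKernel n
  fun_prop

lemma kernelFactor_mem_trigPoly :
    (fun t => (kernelFactor n A B c t : ℂ)) ∈
      trigPoly (Set.Icc (-((n + 1 : ℕ) : ℤ)) ((n + 1 : ℕ) : ℤ)) := by
  have hcos : (fun s => ((A * cos (2 * π * s) + B : ℝ) : ℂ)) ∈ trigPoly (Set.Icc (-1) 1) := by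
    have hexpand : (fun s => ((A * cos (2 * π * s) + B : ℝ) : ℂ)) =
        (A / 2 : ℂ) • expChar 1 + (A / 2 : ℂ) • expChar (-1) + (B : ℂ) • expChar 0 := by
      funext s
      have h := two_mul_cos_eq_expChar s
      push_cast at h ⊢
      simp only [Pi.add_apply, Pi.smul_apply, smul_eq_mul, expChar_zero]
      linear_combination (A / 2 : ℂ) * h
    rw [hexpand]
    exact add_mem (add_mem (Submodule.smul_mem _ _ (expChar_mem_trigPoly (by simp)))
      (Submodule.smul_mem _ _ (expChar_mem_trigPoly (by simp))))
      (Submodule.smul_mem _ _ (expChar_mem_trigPoly (by simp)))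
  have hprod := comp_sub_mem_trigPoly (mul_mem_trigPoly hcos (sineKernel_mem_trigPoly n)) c
  refine trigPoly_mono ?_ (by simpa [kernelFactor] using hprod)
  refine (Set.Icc_add_Icc_subset _ _ _ _).trans (Set.Icc_subset_Icc ?_ ?_) <;> push_cast <;> omega

lemma integral_kernelFactor :
    ∫ t in Set.Ico (0 : ℝ) 1, kernelFactor n A B c t =
      (A * cos (π / (n + 2)) + B) * ∫ t in Set.Ico (0 : ℝ) 1, sineKernel n t := by
  have hperiodic : Function.Periodic
      (fun s => (A * cos (2 * π * s) + B) * sineKernel n s) 1 := fun s => by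
    simp only [mul_add, mul_one, Real.cos_add_two_pi, periodic_sineKernel n s]
  have hK := continuous_sineKernel n
  unfold kernelFactor
  rw [integral_Ico_comp_sub_of_periodic hperiodic]
  simp only [add_mul, mul_assoc A]
  have hcosK : Continuous fun s => cos (2 * π * s) * sineKernel n s := by fun_prop
  rw [integral_add (hcosK.integrableOn_Ico.const_mul _) (hK.integrableOn_Ico.const_mul _),
    integral_const_mul, integral_const_mul, integral_cos_mul_sineKernel]

end KernelFactor

section KernelFactorSign

variable {n : ℕ} {A B c t : ℝ}

lemma kernelFactor_nonneg (h : 0 ≤ A * cos (2 * π * (t - c)) + B) :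
    0 ≤ kernelFactor n A B c t :=
  mul_nonneg h (sineKernel_nonneg n _)

lemma kernelFactor_nonpos (h : A * cos (2 * π * (t - c)) + B ≤ 0) :
    kernelFactor n A B c t ≤ 0 :=
  mul_nonpos_of_nonpos_of_nonneg h (sineKernel_nonneg n _)

lemma kernelFactor_le_kernelFactor_zero (hA : 0 ≤ A) :
    kernelFactor n A B c t ≤ kernelFactor n 0 (A + B) c t := by
  refine mul_le_mul_of_nonneg_right ?_ (sineKernel_nonneg n _)
  nlinarith [Real.cos_le_one (2 * π * (t - c))]

end KernelFactorSign

lemma cos_two_pi_sub_midpoint_le {x y p : ℝ} (hx : 0 ≤ x) (hxy : x ≤ y) (hy : y ≤ 1)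
    (hp0 : 0 ≤ p) (hp1 : p < 1) (hp : p ∉ Set.Ico x y) :
    cos (2 * π * (p - (x + y) / 2)) ≤ cos (π * (y - x)) := by
  have hu : (y - x) / 2 ≤ |p - (x + y) / 2| ∧ |p - (x + y) / 2| ≤ 1 - (y - x) / 2 := by
    rw [Set.mem_Ico, not_and_or, not_le, not_lt] at hp
    rcases hp with hp | hp
    · rw [abs_of_nonpos (by linarith)]; constructor <;> linarith
    · rw [abs_of_nonneg (by linarith)]; constructor <;> linarith
  have hpi := Real.pi_pos
  rw [← Real.cos_abs, abs_mul, abs_of_pos (by positivity : 0 < 2 * π)]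
  rcases le_or_gt |p - (x + y) / 2| (1 / 2) with hu2 | hu2
  · exact Real.cos_le_cos_of_nonneg_of_le_pi (by nlinarith) (by nlinarith) (by nlinarith)
  · rw [← Real.cos_two_pi_sub]
    exact Real.cos_le_cos_of_nonneg_of_le_pi (by nlinarith) (by nlinarith) (by nlinarith)

lemma mul_one_sub_cos_lt_one_sub_cos {D h : ℝ} {n : ℕ} (hD : 1 ≤ D) (h0 : 0 < h) (h1 : h ≤ 1)
    (hn : π * D / h ≤ n) :
    D * (1 - cos (π / (n + 2))) < 1 - cos (π * h) := by
  have hpi := Real.pi_pos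
  have hθ : π / (n + 2) < h / D := by
    rw [div_le_iff₀ h0] at hn
    rw [div_lt_div_iff₀ (by positivity) (by positivity)]
    nlinarith
  have hθ0 : 0 < π / (n + 2) := by positivity
  have hcosθ := Real.one_sub_sq_div_two_le_cos (x := π / (n + 2))
  have hcosh := Real.cos_le_one_sub_mul_cos_sq (x := π * h)
    (by rw [abs_of_pos (by positivity)]; nlinarith)
  have hsq : D * (π / (n + 2)) ^ 2 < h ^ 2 := by
    calc D * (π / (n + 2)) ^ 2 < D * (h / D) ^ 2 := by gcongr
      _ = h ^ 2 / D := by field_simp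
      _ ≤ h ^ 2 := div_le_self (by positivity) hD
  rw [show 2 / π ^ 2 * (π * h) ^ 2 = 2 * h ^ 2 by field_simp] at hcosh
  nlinarith

lemma ceil_add_one_le {D h : ℝ} (hD : 1 ≤ D) (h0 : 0 < h) (h1 : h ≤ 1) :
    (⌈π * D / h⌉₊ : ℝ) + 1 ≤ 6 * D / h := by
  have hceil := Nat.ceil_lt_add_one (by positivity : 0 ≤ π * D / h)
  have : π * D / h + 2 ≤ 6 * D / h := by
    rw [div_add' _ _ _ h0.ne', div_le_div_iff_of_pos_right h0]
    nlinarith [Real.pi_le_four]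
  linarith

def boxUpper (n : ℕ) (x y : ℝ) : ℝ → ℝ :=
  kernelFactor n 0 (1 - cos (π * (y - x))) ((x + y) / 2)

def boxLower (n : ℕ) (x y : ℝ) : ℝ → ℝ :=
  kernelFactor n 1 (-cos (π * (y - x))) ((x + y) / 2)

section BoxFactors

variable (n : ℕ) {x y : ℝ}

lemma boxUpper_nonneg (t : ℝ) : 0 ≤ boxUpper n x y t :=
  kernelFactor_nonneg (by simpa using Real.cos_le_one _)

lemma boxLower_le_boxUpper (t : ℝ) : boxLower n x y t ≤ boxUpper n x y t := by
  rw [boxUpper, sub_eq_add_neg]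
  exact kernelFactor_le_kernelFactor_zero zero_le_one

lemma boxLower_nonpos (hx : 0 ≤ x) (hxy : x ≤ y) (hy : y ≤ 1) {t : ℝ} (ht0 : 0 ≤ t) (ht1 : t < 1)
    (ht : t ∉ Set.Ico x y) : boxLower n x y t ≤ 0 :=
  kernelFactor_nonpos (by linarith [cos_two_pi_sub_midpoint_le hx hxy hy ht0 ht1 ht])

lemma integral_boxUpper_pos (hxy : x < y) (hy : y - x ≤ 1) :
    0 < ∫ t in Set.Ico (0 : ℝ) 1, boxUpper n x y t := by
  rw [boxUpper, integral_kernelFactor, zero_mul, zero_add]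
  refine mul_pos ?_ (integral_sineKernel_pos n)
  have hcos := Real.cos_le_one_sub_mul_cos_sq (x := π * (y - x))
    (by rw [abs_of_pos (mul_pos Real.pi_pos (sub_pos.2 hxy))]; nlinarith [Real.pi_pos])
  have : 0 < 2 / π ^ 2 * (π * (y - x)) ^ 2 := by have := sub_pos.2 hxy; positivity
  linarith

lemma integral_boxLower_gap {D : ℝ} (hD : 1 ≤ D) (hxy : x < y) (hy : y - x ≤ 1)
    (hn : π * D / (y - x) ≤ n) :
    (D - 1) * ∫ t in Set.Ico (0 : ℝ) 1, boxUpper n x y t <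
      D * ∫ t in Set.Ico (0 : ℝ) 1, boxLower n x y t := by
  have hgap := mul_one_sub_cos_lt_one_sub_cos hD (sub_pos.2 hxy) hy hn
  rw [boxUpper, boxLower, integral_kernelFactor, integral_kernelFactor]
  nlinarith [integral_sineKernel_pos n]

end BoxFactors

lemma prod_max_ceil_add_one_le {d : ℕ} {h : Fin d → ℝ} (h0 : ∀ j, 0 < h j) (h1 : ∀ j, h j ≤ 1)
    {L : ℝ} (hL : 0 < L) (hvol : (6 * d) ^ d / L < ∏ j, h j) :
    ∏ j, max ((⌈π * d / h j⌉₊ + 1 : ℕ) : ℝ) 1 ≤ L := by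
  have hD : ∀ j : Fin d, (1 : ℝ) ≤ d := fun j => by exact_mod_cast j.pos
  have hvol0 : 0 < ∏ j, h j := Finset.prod_pos fun j _ => h0 j
  calc ∏ j, max ((⌈π * d / h j⌉₊ + 1 : ℕ) : ℝ) 1
      ≤ ∏ j, 6 * d / h j := by
        refine Finset.prod_le_prod (fun j _ => by positivity) fun j _ => ?_
        rw [max_eq_left (by simp)]
        exact_mod_cast ceil_add_one_le (hD j) (h0 j) (h1 j)
    _ = (6 * d) ^ d / ∏ j, h j := by
        rw [Finset.prod_div_distrib, Finset.prod_const, Finset.card_univ, Fintype.card_fin]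
    _ ≤ L := by
        rw [div_lt_iff₀ hL] at hvol
        rw [div_le_iff₀ hvol0]
        linarith

/-- Theorem FT.2: the dispersion of a Korobov point set whose cubature formula is exact on
`T(L,d)` is at most `C₁(d)/L`: every axis-parallel box inside `[0,1)^d` avoiding all
Korobov nodes has volume at most `C₁(d)/L`. -/
theorem korobov_dispersion (d : ℕ) (hd : 2 ≤ d) :
    ∃ C₁ : ℝ, 0 < C₁ ∧
      ∀ m : ℕ, 0 < m → ∀ a : Fin d → ℤ, ∀ L : ℕ, 2 ≤ L → IsExact d m a L →
        ∀ x y : Fin d → ℝ, (∀ j, 0 ≤ x j) → (∀ j, x j < y j) → (∀ j, y j ≤ 1) →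
          (∀ μ ∈ Finset.Icc 1 m, ∃ j, korobovNode d m a μ j ∉ Set.Ico (x j) (y j)) →
          ∏ j, (y j - x j) ≤ C₁ / L := by
  have hD : (1 : ℝ) ≤ d := by exact_mod_cast (by omega : 1 ≤ d)
  have : Nonempty (Fin d) := ⟨⟨0, by omega⟩⟩
  refine ⟨(6 * d) ^ d, by positivity, ?_⟩
  intro m _ a L hL hex x y hx hxy hy hempty
  by_contra! hvol
  have hside : ∀ j, y j - x j ≤ 1 := fun j => by linarith [hx j, hy j]
  set n : Fin d → ℕ := fun j => ⌈π * d / (y j - x j)⌉₊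
  set Φ : (Fin d → ℝ) → ℝ := fun z => minorantComb (fun j => boxLower (n j) (x j) (y j) (z j))
    (fun j => boxUpper (n j) (x j) (y j) (z j))
  have hmem : (fun z => (Φ z : ℂ)) ∈ TSpace d L :=
    TSpace_mono (prod_max_ceil_add_one_le (fun j => sub_pos.2 (hxy j)) hside
      (Nat.cast_pos.2 (by omega)) hvol)
      (minorantComb_mem_TSpace (fun j => n j + 1) (fun j => kernelFactor_mem_trigPoly _ _ _ _)
        fun j => kernelFactor_mem_trigPoly _ _ _ _)
  have hnodes : (m : ℝ)⁻¹ * ∑ μ ∈ Finset.Icc 1 m, Φ (korobovNode d m a μ) ≤ 0 := by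
    refine mul_nonpos_of_nonneg_of_nonpos (by positivity) (Finset.sum_nonpos fun μ hμ => ?_)
    obtain ⟨j, hj⟩ := hempty μ hμ
    exact minorantComb_nonpos (fun i => boxUpper_nonneg _ _) (fun i => boxLower_le_boxUpper _ _)
      (boxLower_nonpos _ (hx j) (hxy j).le (hy j) (Int.fract_nonneg _) (Int.fract_lt_one _) hj)
  have hmean : 0 < ∫ z in unitCube d, Φ z := by
    rw [integral_minorantComb (f := fun j => boxLower (n j) (x j) (y j))
      (g := fun j => boxUpper (n j) (x j) (y j))
      (fun j => (continuous_kernelFactor _ _ _ _).integrableOn_Ico)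
      fun j => (continuous_kernelFactor _ _ _ _).integrableOn_Ico]
    refine minorantComb_pos (fun j => integral_boxUpper_pos _ (hxy j) (hside j)) fun j => ?_
    rw [Fintype.card_fin]
    exact integral_boxLower_gap _ hD (hxy j) (hside j) (Nat.le_ceil _)
  linarith [hex.korobov_mean_eq_integral hmem]

end
end

section
/- Let d ≥ 1, and let m be a prime number and L a natural number such that the cardinality of the hyperbolic cross satisfies |Γ(L,d)| < (m−1)/d. Then there exists a natural number a ∈ [1, m) such that for all k = (k_1,…,k_d) ∈ Γ(L,d) with k ≠ 0, one has k_1 + a·k_2 + a²·k_3 + … + a^{d−1}·k_d ≢ 0 (mod m). -/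
open MeasureTheory Real

noncomputable section

/-!
A nonzero `k ∈ Γ(L,d)` has coordinates of absolute value at most `L < m`, so its reduction
mod `m` is a nonzero coefficient vector and `∑ⱼ kⱼ Xʲ` is a nonzero polynomial over the field
`ZMod m` of degree `< d`, with at most `d - 1` roots (`L < m` holds because the points
`t • e₁`, `1 ≤ t ≤ L`, lie in `Γ(L,d)`). Altogether these polynomials vanish at
no more than `|Γ(L,d)| (d - 1) < m - 1` points, so some nonzero residue `a` avoids all of them.
-/

open Finset Polynomial

section RootCount

variable {R : Type*} [CommRing R] [IsDomain R] {d : ℕ}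

lemma card_filter_sum_mul_pow_eq_zero_le [DecidableEq R] (s : Finset R) {c : Fin d → R}
    (hc : c ≠ 0) :
    #{x ∈ s | ∑ j, c j * x ^ (j : ℕ) = 0} ≤ d - 1 := by
  set p : R[X] := ∑ j, C (c j) * X ^ (j : ℕ)
  have hcoeff (j : Fin d) : p.coeff j = c j := by
    simp [p, finsetSum_coeff, coeff_C_mul, coeff_X_pow, Fin.val_inj]
  have hp : p ≠ 0 := by
    obtain ⟨j, hj⟩ := Function.ne_iff.mp hc
    exact fun h => hj (by simpa [h] using (hcoeff j).symm)
  have hdeg : p.natDegree ≤ d - 1 :=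
    natDegree_sum_le_of_forall_le _ _ fun j _ =>
      (natDegree_C_mul_X_pow_le _ _).trans (Nat.le_sub_one_of_lt j.isLt)
  refine (card_le_degree_of_subset_roots fun x hx => ?_).trans hdeg
  rw [mem_roots hp, IsRoot, eval_finsetSum]
  simp only [eval_mul, eval_C, eval_pow, eval_X]
  exact (mem_filter.mp hx).2

lemma exists_ne_zero_forall_sum_mul_pow_ne_zero [Fintype R] {ι : Type*} (s : Finset ι)
    (c : ι → Fin d → R) (hc : ∀ i ∈ s, c i ≠ 0)
    (hcard : #s * (d - 1) + 1 < Fintype.card R) :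
    ∃ x ≠ 0, ∀ i ∈ s, ∑ j, c i j * x ^ (j : ℕ) ≠ 0 := by
  classical
  by_contra! h
  have hcover : (univ : Finset R) ⊆
      insert 0 (s.biUnion fun i => {x | ∑ j, c i j * x ^ (j : ℕ) = 0}) := by
    intro x _
    rcases eq_or_ne x 0 with rfl | hx
    · exact mem_insert_self _ _
    · obtain ⟨i, hi, hix⟩ := h x hx
      exact mem_insert_of_mem (mem_biUnion.mpr ⟨i, hi, by simpa using hix⟩)
  have := calc
    Fintype.card R ≤ #(s.biUnion fun i => {x | ∑ j, c i j * x ^ (j : ℕ) = 0}) + 1 :=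
      (card_le_card hcover).trans (card_insert_le _ _)
    _ ≤ ∑ i ∈ s, #({x | ∑ j, c i j * x ^ (j : ℕ) = 0} : Finset R) + 1 :=
      Nat.add_le_add_right card_biUnion_le _
    _ ≤ ∑ _i ∈ s, (d - 1) + 1 :=
      Nat.add_le_add_right (sum_le_sum fun i hi => card_filter_sum_mul_pow_eq_zero_le _ (hc i hi)) _
    _ = #s * (d - 1) + 1 := by rw [sum_const, smul_eq_mul]
  omega

end RootCount

section HyperbolicCross

variable {d : ℕ}

lemma abs_le_of_mem_hyperbolicCross {N : ℝ} {k : Fin d → ℤ} (hk : k ∈ hyperbolicCross d N)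
    (j : Fin d) : |(k j : ℝ)| ≤ N :=
  (le_prod_max_one (mem_univ j) fun i => |(k i : ℝ)|).trans hk

lemma hyperbolicCross_finite (d : ℕ) (N : ℝ) : (hyperbolicCross d N).Finite := by
  refine (Set.Finite.pi fun _ => Set.finite_Icc (-⌈N⌉) ⌈N⌉).subset fun k hk j _ => ?_
  refine abs_le.mp (Int.cast_le (R := ℝ).mp ?_)
  push_cast
  exact (abs_le_of_mem_hyperbolicCross hk j).trans (Int.le_ceil N)

lemma le_ncard_hyperbolicCross (hd : d ≠ 0) (L : ℕ) : L ≤ (hyperbolicCross d L).ncard := by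
  let j₀ : Fin d := ⟨0, Nat.pos_of_ne_zero hd⟩
  let e : ℕ → Fin d → ℤ := fun t => Pi.single j₀ (t : ℤ)
  have hmem (t : ℕ) (ht : t ∈ Set.Icc 1 L) : e t ∈ hyperbolicCross d L := by
    have h1 : (1 : ℝ) ≤ t := by exact_mod_cast ht.1
    show ∏ j, max |((e t j : ℤ) : ℝ)| 1 ≤ L
    rw [Fintype.prod_eq_single j₀ fun j hj => by simp [e, hj]]
    simpa [e, abs_of_nonneg (zero_le_one.trans h1), h1] using ht.2
  have hinj : Set.InjOn e (Set.Icc 1 L) := fun s _ t _ hst => by simpa [e] using congrFun hst j₀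
  simpa using Set.ncard_le_ncard_of_injOn _ hmem hinj (hyperbolicCross_finite d L)

lemma intCast_comp_ne_zero_of_mem_hyperbolicCross {m L : ℕ} (hLm : L < m) {k : Fin d → ℤ}
    (hk : k ∈ hyperbolicCross d L) (hk0 : k ≠ 0) : ((↑) ∘ k : Fin d → ZMod m) ≠ 0 := by
  obtain ⟨j, hj⟩ := Function.ne_iff.mp hk0
  refine Function.ne_iff.mpr ⟨j, fun h => hj (Int.eq_zero_of_abs_lt_dvd (m := m) ?_ ?_)⟩
  · exact (ZMod.intCast_zmod_eq_zero_iff_dvd _ _).mp h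
  · have : |(k j : ℝ)| < m :=
      (abs_le_of_mem_hyperbolicCross hk j).trans_lt (by exact_mod_cast hLm)
    exact_mod_cast this

end HyperbolicCross

theorem korobov_exact_exists_general (d : ℕ) (m L : ℕ) (hm : Nat.Prime m)
    (hcard : ((hyperbolicCross d L).ncard : ℝ) < ((m : ℝ) - 1) / d) :
    ∃ a : ℕ, 1 ≤ a ∧ a < m ∧
      ∀ k ∈ hyperbolicCross d (L : ℝ), k ≠ 0 →
        ¬ ((m : ℤ) ∣ ∑ j : Fin d, (a : ℤ) ^ (j : ℕ) * k j) := by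
  have := Fact.mk hm
  have hΓ := hyperbolicCross_finite d L
  set n := (hyperbolicCross d L).ncard
  -- `(m - 1) / 0 = 0` in `ℝ`, so `hcard` rules out `d = 0`.
  have hd : d ≠ 0 := by
    rintro rfl
    simp only [CharP.cast_eq_zero, div_zero] at hcard
    exact (Nat.cast_nonneg n).not_gt hcard
  have hnd : n * d + 1 < m := by
    have := (lt_div_iff₀ (by positivity)).mp hcard
    exact_mod_cast (by push_cast; linarith : ((n * d + 1 : ℕ) : ℝ) < m)
  have hLm : L < m := by
    have := Nat.le_mul_of_pos_right n (Nat.pos_of_ne_zero hd)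
    have := le_ncard_hyperbolicCross hd L
    omega
  set s := hΓ.toFinset.erase 0
  have hs : #s * (d - 1) + 1 < Fintype.card (ZMod m) := by
    have : #s ≤ n := card_erase_le.trans (Set.ncard_eq_toFinset_card _ hΓ).ge
    rw [ZMod.card]
    nlinarith [Nat.sub_le d 1]
  obtain ⟨x, hx0, hx⟩ := exists_ne_zero_forall_sum_mul_pow_ne_zero s (fun k => (↑) ∘ k)
    (fun k hk => intCast_comp_ne_zero_of_mem_hyperbolicCross hLm
      (hΓ.mem_toFinset.mp (mem_of_mem_erase hk)) (ne_of_mem_erase hk)) hs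
  refine ⟨x.val, Nat.one_le_iff_ne_zero.mpr ((ZMod.val_ne_zero x).mpr hx0), x.val_lt,
    fun k hk hk0 hdvd => hx k (by simp [s, hk, hk0]) ?_⟩
  rw [← ZMod.intCast_zmod_eq_zero_iff_dvd] at hdvd
  push_cast at hdvd
  simpa [mul_comm] using hdvd

/-- Lemma FL.2: if `|Γ(L,d)| < (m-1)/d` with `m` prime, then there is `a ∈ [1,m)` with
`k₁ + a k₂ + ⋯ + a^{d-1} k_d ≢ 0 (mod m)` for all nonzero `k ∈ Γ(L,d)`. -/
theorem korobov_exact_exists (d : ℕ) (hd : 1 ≤ d) (m L : ℕ) (hm : Nat.Prime m)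
    (hcard : ((hyperbolicCross d L).ncard : ℝ) < ((m : ℝ) - 1) / d) :
    ∃ a : ℕ, 1 ≤ a ∧ a < m ∧
      ∀ k ∈ hyperbolicCross d (L : ℝ), k ≠ 0 →
        ¬ ((m : ℤ) ∣ ∑ j : Fin d, (a : ℤ) ^ (j : ℕ) * k j) :=
  korobov_exact_exists_general d m L hm hcard

end
end

section
/- There exists an absolute constant γ > 0 such that for every n > 2, the 2-dimensional hyperbolic cross Γ(γ·b_n, 2) intersects L(n) \ {0} in the empty set, where b_n is the n-th Fibonacci number and L(n) = {k = (k_1,k_2) ∈ ℤ² : k_1 + b_{n−1}·k_2 ≡ 0 (mod b_n)}. -/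
open MeasureTheory Real

noncomputable section

/-!
Write `k₁ + b_{n-1} k₂ = b_n t`. The norm form `N(x, y) = x² - xy - y²` of `ℤ[φ]` has no
nontrivial integer zeros because φ is irrational, and Cassini's identity makes
`(b_n, b_{n-1})` a unit of `N`, so that `b_n² N(t, -k₂)` is a binary form in `(k₁, k₂)` with
coefficients `1, 2 b_{n-1} + b_n, ±1`. Hence `b_n² ≤ k₁² + 3 b_n |k₁ k₂| + k₂²` at every
nonzero lattice point, which fails once `max(|k₁|,1) max(|k₂|,1) ≤ b_n / 4`.
-/

def goldenNorm (x y : ℤ) : ℤ := x ^ 2 - x * y - y ^ 2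

lemma goldenNorm_eq_mul (x y : ℤ) :
    (goldenNorm x y : ℝ) = (x - y * goldenRatio) * (x - y * goldenConj) := by
  have hsum := goldenRatio_add_goldenConj
  have hprod := goldenRatio_mul_goldenConj
  simp only [goldenNorm, Int.cast_sub, Int.cast_mul, Int.cast_pow]
  linear_combination ((x : ℝ) * y) * hsum - (y : ℝ) ^ 2 * hprod

lemma goldenNorm_ne_zero {x y : ℤ} (h : x ≠ 0 ∨ y ≠ 0) : goldenNorm x y ≠ 0 := by
  rcases eq_or_ne y 0 with rfl | hy
  · simpa [goldenNorm] using h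
  intro h0
  have hyR : (y : ℝ) ≠ 0 := Int.cast_ne_zero.2 hy
  have hzero := goldenNorm_eq_mul x y
  rw [h0, Int.cast_zero, eq_comm, mul_eq_zero, sub_eq_zero, sub_eq_zero] at hzero
  rcases hzero with hφ | hψ
  · exact (irrational_iff_ne_rational _).1 goldenRatio_irrational x y hy
      ((eq_div_iff hyR).2 (by rw [hφ, mul_comm]))
  · exact (irrational_iff_ne_rational _).1 goldenConj_irrational x y hy
      ((eq_div_iff hyR).2 (by rw [hψ, mul_comm]))

lemma goldenNorm_add_left (x y : ℤ) : goldenNorm (x + y) x = -goldenNorm x y := by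
  unfold goldenNorm; ring

lemma goldenNorm_fibb_succ (m : ℕ) : goldenNorm (fibb (m + 1)) (fibb m) = (-1) ^ (m + 1) := by
  induction m with
  | zero => rfl
  | succ m ih =>
    rw [show fibb (m + 2) = fibb (m + 1) + fibb m from rfl, Nat.cast_add, goldenNorm_add_left,
      ih, pow_succ _ (m + 1), mul_neg_one]

lemma fibb_le_fibb_succ (m : ℕ) : fibb m ≤ fibb (m + 1) := by
  cases m with
  | zero => exact le_rfl
  | succ m => exact Nat.le_add_right _ _

lemma one_le_fibb (m : ℕ) : 1 ≤ fibb m := by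
  induction m with
  | zero => exact le_rfl
  | succ m ih => exact ih.trans (fibb_le_fibb_succ m)

lemma sq_le_of_dvd_add_mul {b a k₁ k₂ : ℤ} (hunit : |goldenNorm b a| = 1)
    (hdvd : b ∣ k₁ + a * k₂) (hk : k₁ ≠ 0 ∨ k₂ ≠ 0) :
    b ^ 2 ≤ k₁ ^ 2 + |2 * a + b| * |k₁ * k₂| + k₂ ^ 2 := by
  obtain ⟨t, ht⟩ := hdvd
  have htk : t ≠ 0 ∨ -k₂ ≠ 0 := by
    by_contra! h
    obtain ⟨rfl, hk₂⟩ := h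
    obtain rfl : k₂ = 0 := neg_eq_zero.1 hk₂
    simp_all
  have hform : b ^ 2 * goldenNorm t (-k₂) =
      k₁ ^ 2 + (2 * a + b) * (k₁ * k₂) - goldenNorm b a * k₂ ^ 2 := by
    unfold goldenNorm; linear_combination (-(b * t) - (k₁ + a * k₂) - b * k₂) * ht
  calc b ^ 2 ≤ b ^ 2 * |goldenNorm t (-k₂)| :=
        le_mul_of_one_le_right (sq_nonneg b) (Int.one_le_abs (goldenNorm_ne_zero htk))
    _ = |k₁ ^ 2 + (2 * a + b) * (k₁ * k₂) - goldenNorm b a * k₂ ^ 2| := by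
        rw [← hform, abs_mul, abs_of_nonneg (sq_nonneg b)]
    _ ≤ |k₁ ^ 2| + |2 * a + b| * |k₁ * k₂| + |goldenNorm b a| * |k₂ ^ 2| := by
        rw [← abs_mul, ← abs_mul]
        exact (abs_sub _ _).trans (add_le_add_left (abs_add_le _ _) _)
    _ = k₁ ^ 2 + |2 * a + b| * |k₁ * k₂| + k₂ ^ 2 := by
        rw [hunit, abs_of_nonneg (sq_nonneg k₁), abs_of_nonneg (sq_nonneg k₂), one_mul]

lemma abs_le_max_one_mul_max_one (x y : ℤ) : |x| ≤ max |x| 1 * max |y| 1 :=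
  (le_max_left _ _).trans
    (le_mul_of_one_le_right (le_max_of_le_right zero_le_one) (le_max_right _ _))

lemma abs_mul_le_max_one_mul_max_one (x y : ℤ) : |x * y| ≤ max |x| 1 * max |y| 1 := by
  rw [abs_mul]
  exact mul_le_mul (le_max_left _ _) (le_max_left _ _) (abs_nonneg y)
    (le_max_of_le_right zero_le_one)

/-- Lemma FL.1: there is an absolute `γ > 0` such that the hyperbolic cross `Γ(γ b_n, 2)`
intersects `L(n) \\ {0}` trivially: any `(k₁,k₂)` with `max(|k₁|,1)·max(|k₂|,1) ≤ γ b_n`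
and `k₁ + b_{n-1} k₂ ≡ 0 (mod b_n)` must be zero. -/
theorem fibonacci_hyperbolic_cross_empty :
    ∃ γ : ℝ, 0 < γ ∧
      ∀ n : ℕ, 2 < n → ∀ k₁ k₂ : ℤ,
        ((max |k₁| 1 * max |k₂| 1 : ℤ) : ℝ) ≤ γ * fibb n →
        (fibb n : ℤ) ∣ (k₁ + (fibb (n - 1) : ℤ) * k₂) →
        k₁ = 0 ∧ k₂ = 0 := by
  refine ⟨1 / 4, by norm_num, fun n hn k₁ k₂ hcross hdvd => ?_⟩
  obtain ⟨m, rfl⟩ : ∃ m, n = m + 1 := ⟨n - 1, by omega⟩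
  rw [Nat.add_sub_cancel] at hdvd
  by_contra hk
  have hb : (1 : ℤ) ≤ fibb (m + 1) := by exact_mod_cast one_le_fibb (m + 1)
  have hab : (fibb m : ℤ) ≤ fibb (m + 1) := by exact_mod_cast fibb_le_fibb_succ m
  set b : ℤ := (fibb (m + 1) : ℤ)
  set P := max |k₁| 1 * max |k₂| 1
  have hunit : |goldenNorm b (fibb m)| = 1 := by
    rw [goldenNorm_fibb_succ, abs_pow, abs_neg, abs_one, one_pow]
  have key := sq_le_of_dvd_add_mul hunit hdvd (not_and_or.1 hk)
  have hcoef : |2 * (fibb m : ℤ) + b| ≤ 3 * b := by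
    rw [abs_of_nonneg (by positivity)]; linarith
  have hPb : 4 * P ≤ b := by
    have : (4 : ℝ) * P ≤ fibb (m + 1) := by linarith
    exact_mod_cast this
  have hk₁ : k₁ ^ 2 ≤ P ^ 2 :=
    sq_le_sq.2 ((abs_le_max_one_mul_max_one k₁ k₂).trans (le_abs_self P))
  have hk₂ : k₂ ^ 2 ≤ P ^ 2 :=
    sq_le_sq.2 (((abs_le_max_one_mul_max_one k₂ k₁).trans_eq (mul_comm _ _)).trans
      (le_abs_self P))
  have hk₁₂ : |2 * (fibb m : ℤ) + b| * |k₁ * k₂| ≤ 3 * b * P :=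
    mul_le_mul hcoef (abs_mul_le_max_one_mul_max_one k₁ k₂) (abs_nonneg _) (by positivity)
  have hP : 0 ≤ P := by positivity
  nlinarith [mul_le_mul hPb hPb (by positivity) (by positivity)]
end
end

section
/- There is an absolute constant C such that for all n, the dispersion of the n-th Fibonacci point set F_n satisfies disp(F_n) ≤ C/b_n. -/
open MeasureTheory Real

noncomputable section

/-!
Scaled by `b_n`, the Fibonacci points are the points `(u, v)` of the lattice
`v ≡ u b_{n-1} (mod b_n)` with `0 < u ≤ b_n` and `0 ≤ v < b_n`. For every splitting
`n = j + i + 2`, d'Ocagne's identity shows that `(b_j, ±b_{i+1})` and `(b_{j+1}, ∓b_i)` lie in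
this lattice; rounding coordinates with respect to these two vectors, every box of sides
`b_{j+2} × b_{i+2}` (scaled) contains a lattice point. So if an empty box has width `w₀` with
`b_{j+2} < w₀ b_n ≤ b_{j+3}`, its height `w₁` satisfies `w₁ b_n ≤ b_{i+2}`, and
`w₀ w₁ b_n² ≤ b_{j+3} b_{i+2} ≤ b_{n+3} ≤ 8 b_n`.
-/

theorem fibb_add_two (n : ℕ) : fibb (n + 2) = fibb (n + 1) + fibb n := rfl

theorem fibb_eq_fib : ∀ n, fibb n = Nat.fib (n + 1)
  | 0 => rfl
  | 1 => rfl
  | n + 2 => by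
    rw [fibb_add_two, fibb_eq_fib (n + 1), fibb_eq_fib n, Nat.fib_add_two (n := n + 1), add_comm]

theorem fibb_pos (n : ℕ) : 0 < fibb n := by
  rw [fibb_eq_fib]
  exact Nat.fib_pos.2 n.succ_pos

theorem fibb_mono : Monotone fibb := fun a b hab => by
  simp only [fibb_eq_fib]
  exact Nat.fib_mono (by omega)

theorem fibb_mul_le (p q : ℕ) : fibb p * fibb q ≤ fibb (p + q) := by
  simp only [fibb_eq_fib, Nat.fib_add]
  exact Nat.le_add_left _ _

theorem fibb_succ_le_two_mul (n : ℕ) : fibb (n + 1) ≤ 2 * fibb n := by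
  simp only [fibb_eq_fib, Nat.fib_add_two]
  linarith [Nat.fib_le_fib_succ (n := n)]

theorem fibb_add_le_two_pow_mul (n : ℕ) : ∀ k, fibb (n + k) ≤ 2 ^ k * fibb n
  | 0 => by simp
  | k + 1 => by
    rw [← add_assoc, pow_succ']
    linarith [fibb_succ_le_two_mul (n + k), fibb_add_le_two_pow_mul n k]

/-- d'Ocagne's identity. -/
theorem neg_one_pow_mul_fib_succ (j i : ℕ) :
    (-1) ^ j * (Nat.fib (i + 1) : ℤ) =
      Nat.fib (j + 1) * Nat.fib (j + i + 1) - Nat.fib j * Nat.fib (j + i + 2) := by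
  have h := Int.fib_add (-j) (j + i + 1 : ℕ)
  rw [show -(j : ℤ) + (j + i + 1 : ℕ) = (i + 1 : ℕ) by push_cast; ring,
    show -(j : ℤ) - 1 = -(j + 1 : ℕ) by push_cast; ring,
    show ((j + i + 1 : ℕ) : ℤ) + 1 = (j + i + 2 : ℕ) by push_cast; ring,
    Int.fib_neg_natCast, Int.fib_neg_natCast] at h
  simp only [Int.fib_natCast] at h
  have hsq : ((-1 : ℤ) ^ j) ^ 2 = 1 := by rw [← pow_mul, mul_comm, pow_mul, neg_one_sq, one_pow]
  linear_combination (-1 : ℤ) ^ j * h +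
    ((Nat.fib (j + 1) : ℤ) * Nat.fib (j + i + 1) - Nat.fib j * Nat.fib (j + i + 2)) * hsq

theorem fibb_mul_fibb_add_modEq (j i : ℕ) :
    (fibb j : ℤ) * fibb (j + i) ≡ (-1) ^ j * fibb i [ZMOD fibb (j + i + 1)] := by
  simp only [fibb_eq_fib, Int.modEq_iff_dvd, neg_one_pow_mul_fib_succ]
  exact ⟨-Nat.fib j, by ring⟩

open Matrix in
theorem Matrix.exists_abs_mulVec_intCast_sub_le {ι : Type*} [Fintype ι] [DecidableEq ι]
    (M : Matrix ι ι ℝ) (hM : M.det ≠ 0) (c : ι → ℝ) :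
    ∃ z : ι → ℤ, ∀ k, |(M *ᵥ fun i => (z i : ℝ)) k - c k| ≤ (∑ i, |M k i|) / 2 := by
  set r := M⁻¹ *ᵥ c
  refine ⟨fun i => round (r i), fun k => ?_⟩
  have hc : c = M *ᵥ r := by
    rw [mulVec_mulVec, mul_nonsing_inv _ (isUnit_iff_ne_zero.2 hM), one_mulVec]
  rw [hc, ← Pi.sub_apply, ← mulVec_sub, mulVec, dotProduct, Finset.sum_div]
  refine (Finset.abs_sum_le_sum_abs _ _).trans (Finset.sum_le_sum fun i _ => ?_)
  rw [abs_mul, Pi.sub_apply, div_eq_mul_one_div]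
  gcongr
  rw [abs_sub_comm]
  exact abs_sub_round (r i)

open Matrix in
theorem exists_fibb_lattice_point_near (j i : ℕ) (c : Fin 2 → ℝ) :
    ∃ u v : ℤ, v ≡ u * fibb (j + i + 1) [ZMOD fibb (j + i + 2)] ∧
      |(u : ℝ) - c 0| ≤ fibb (j + 2) / 2 ∧ |(v : ℝ) - c 1| ≤ fibb (i + 2) / 2 := by
  -- The columns of `M` lie in the lattice `v ≡ u * b_{j+i+1} [ZMOD b_{j+i+2}]`.
  let M : Matrix (Fin 2) (Fin 2) ℝ :=
    !![fibb j, fibb (j + 1); (-1) ^ j * fibb (i + 1), (-1) ^ (j + 1) * fibb i]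
  have hdet : M.det ≠ 0 := by
    have : M.det = (-1) ^ (j + 1) * (fibb j * fibb i + fibb (j + 1) * fibb (i + 1)) := by
      simp only [M, det_fin_two_of]
      ring
    rw [this]
    refine mul_ne_zero (pow_ne_zero _ (by norm_num)) ?_
    norm_cast
    exact (Nat.add_pos_left (Nat.mul_pos (fibb_pos j) (fibb_pos i)) _).ne'
  obtain ⟨z, hz⟩ := M.exists_abs_mulVec_intCast_sub_le hdet c
  refine ⟨z 0 * fibb j + z 1 * fibb (j + 1),
    z 0 * ((-1) ^ j * fibb (i + 1)) + z 1 * ((-1) ^ (j + 1) * fibb i), ?_, ?_, ?_⟩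
  · have h0 := (fibb_mul_fibb_add_modEq j (i + 1)).mul_left (z 0)
    have h1 := (fibb_mul_fibb_add_modEq (j + 1) i).mul_left (z 1)
    rw [← Nat.add_assoc] at h0
    rw [Nat.add_right_comm j 1 i] at h1
    convert (h0.add h1).symm using 2
    ring
  · convert hz 0 using 2 <;>
      simp [M, mulVec, dotProduct, Fin.sum_univ_two, fibb_add_two, mul_comm, add_comm]
  · convert hz 1 using 2 <;>
      simp [M, mulVec, dotProduct, Fin.sum_univ_two, fibb_add_two, mul_comm, abs_mul]

theorem Int.fract_intCast_div_eq_of_modEq {a v : ℤ} {m : ℕ} (hv0 : 0 ≤ v) (hvm : v < m)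
    (h : v ≡ a [ZMOD m]) : Int.fract ((a : ℝ) / m) = v / m := by
  rw [Int.fract_div_intCast_eq_div_intCast_mod, ← h, Int.emod_eq_of_lt hv0 hvm]

theorem exists_fibNode_mem_Ico {j i : ℕ} {x y : Fin 2 → ℝ} (hx : ∀ k, 0 ≤ x k)
    (hy : ∀ k, y k ≤ 1) (h0 : (fibb (j + 2) : ℝ) < (y 0 - x 0) * fibb (j + i + 2))
    (h1 : (fibb (i + 2) : ℝ) < (y 1 - x 1) * fibb (j + i + 2)) :
    ∃ μ ∈ Finset.Icc 1 (fibb (j + i + 2)), ∀ k, fibNode (j + i + 2) μ k ∈ Set.Ico (x k) (y k) := by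
  set m := fibb (j + i + 2)
  have hm : (0 : ℝ) < m := by exact_mod_cast fibb_pos _
  have mem {w : ℝ} {k : Fin 2} (hxw : x k * m < w) (hwy : w < y k * m) :
      w / m ∈ Set.Ico (x k) (y k) :=
    ⟨(le_div_iff₀ hm).2 hxw.le, (div_lt_iff₀ hm).2 hwy⟩
  obtain ⟨u, v, huv, hu, hv⟩ := exists_fibb_lattice_point_near j i fun k => (x k + y k) / 2 * m
  rw [abs_le] at hu hv
  have hxu : x 0 * m < u := by linarith [hu.1]
  have huy : u < y 0 * m := by linarith [hu.2]
  have hxv : x 1 * m < v := by linarith [hv.1]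
  have hvy : v < y 1 * m := by linarith [hv.2]
  have hu0 : (0 : ℝ) < u := (mul_nonneg (hx 0) hm.le).trans_lt hxu
  have hum : (u : ℝ) < m := huy.trans_le (mul_le_of_le_one_left hm.le (hy 0))
  have hv0 : (0 : ℝ) ≤ v := (mul_nonneg (hx 1) hm.le).trans hxv.le
  have hvm : (v : ℝ) < m := hvy.trans_le (mul_le_of_le_one_left hm.le (hy 1))
  lift u to ℕ using (by exact_mod_cast hu0.le)
  refine ⟨u, Finset.mem_Icc.2 ⟨by exact_mod_cast hu0, by exact_mod_cast hum.le⟩,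
    Fin.forall_fin_two.2 ⟨?_, ?_⟩⟩
  · simpa [fibNode] using mem hxu huy
  · have hnode : fibNode (j + i + 2) u 1 = v / m := by
      have := Int.fract_intCast_div_eq_of_modEq (by exact_mod_cast hv0) (by exact_mod_cast hvm) huv
      push_cast at this
      simpa [fibNode] using this
    rw [hnode]
    exact mem hxv hvy

/-- Theorem FT.1: the dispersion of the Fibonacci point set is at most `C/b_n`. -/
theorem fibonacci_dispersion :
    ∃ C : ℝ, 0 < C ∧
      ∀ n : ℕ, ∀ x y : Fin 2 → ℝ, (∀ j, 0 ≤ x j) → (∀ j, x j < y j) → (∀ j, y j ≤ 1) →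
        (∀ μ ∈ Finset.Icc 1 (fibb n), ∃ j, fibNode n μ j ∉ Set.Ico (x j) (y j)) →
        (y 0 - x 0) * (y 1 - x 1) ≤ C / fibb n := by
  refine ⟨8, by norm_num, fun n x y hx hxy hy hempty => ?_⟩
  have hm : (0 : ℝ) < fibb n := by exact_mod_cast fibb_pos n
  have hw0 : (y 0 - x 0) * fibb n ≤ fibb n := mul_le_of_le_one_left hm.le (by linarith [hx 0, hy 0])
  have hw1 : 0 < y 1 - x 1 := sub_pos.2 (hxy 1)
  rw [le_div_iff₀ hm]
  by_cases hsmall : (y 0 - x 0) * fibb n ≤ 2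
  · nlinarith [hy 1, hx 1]
  obtain ⟨J, hJ, hJ'⟩ := Nat.exists_not_and_succ_of_not_zero_of_exists
    (p := fun k => (y 0 - x 0) * fibb n ≤ fibb (k + 2)) hsmall
    ⟨n, hw0.trans (by exact_mod_cast fibb_mono (n.le_add_right 2))⟩
  rw [not_le] at hJ
  have hJn : J + 2 < n := fibb_mono.reflect_lt (by exact_mod_cast hJ.trans_le hw0)
  obtain ⟨i, rfl⟩ : ∃ i, n = J + i + 2 := ⟨n - J - 2, by omega⟩
  have hw1m : (y 1 - x 1) * fibb (J + i + 2) ≤ fibb (i + 2) := by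
    by_contra! h
    obtain ⟨μ, hμ, hmem⟩ := exists_fibNode_mem_Ico hx hy hJ h
    obtain ⟨k, hk⟩ := hempty μ hμ
    exact hk (hmem k)
  have hfibb : (fibb (J + 3) : ℝ) * fibb (i + 2) ≤ 8 * fibb (J + i + 2) := by
    have := ((fibb_mul_le (J + 3) (i + 2)).trans_eq (congrArg fibb (by ring))).trans
      (fibb_add_le_two_pow_mul (J + i + 2) 3)
    exact_mod_cast this
  refine le_of_mul_le_mul_right ?_ hm
  calc (y 0 - x 0) * (y 1 - x 1) * fibb (J + i + 2) * fibb (J + i + 2)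
      = ((y 0 - x 0) * fibb (J + i + 2)) * ((y 1 - x 1) * fibb (J + i + 2)) := by ring
    _ ≤ fibb (J + 3) * fibb (i + 2) := mul_le_mul hJ' hw1m (by positivity) (by positivity)
    _ ≤ 8 * fibb (J + i + 2) := hfibb

end
end

section
/- For every r ∈ ℕ, u ∈ (0,1], and k ∈ ℤ, the k-th Fourier coefficient of the periodization h̃^r_u of h^r_u satisfies |ĥ̃^r_u(k)| ≤ min(u^r, 1/|k|^r), where for k = 0 the right-hand side is u^r. -/
open MeasureTheory Real

noncomputable section

/-!
Unfolding the periodization, the `k`-th Fourier coefficient of `h̃^r_u` is the Fourier transform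
of `h^r_u` at `k`. As `h^r_u` is the `r`-fold convolution of the box `h^1_u`, this is
`(ĥ^1_u(k))^r`, and the box satisfies both `|ĥ^1_u(k)| ≤ ∫ h^1_u = u` and
`|ĥ^1_u(k)| = |e^{-πiku} - e^{πiku}| / (2π|k|) ≤ 1 / (π|k|)`.
-/

open Set FourierTransform
open scoped Convolution

section Periodization

variable {E : Type*} [NormedAddCommGroup E] [NormedSpace ℝ E] {f : ℝ → E}

theorem MeasureTheory.Integrable.hasSum_setIntegral_Ioc_comp_int_add (hf : Integrable f) :
    HasSum (fun m : ℤ => ∫ x in Ioc (0 : ℝ) 1, f (m + x)) (∫ x, f x) := by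
  simpa only [intervalIntegral.integral_of_le zero_le_one, add_comm]
    using hf.hasSum_intervalIntegral_comp_add_int

theorem MeasureTheory.Integrable.setIntegral_Ico_tsum_int_add (hf : Integrable f) :
    ∫ x in Ico (0 : ℝ) 1, ∑' m : ℤ, f (m + x) = ∫ x, f x := by
  rw [integral_Ico_eq_integral_Ioo, ← integral_Ioc_eq_integral_Ioo]
  refine (hasSum_integral_of_summable_integral_norm
    (fun m : ℤ => (hf.comp_add_left (m : ℝ)).integrableOn)
    hf.norm.hasSum_setIntegral_Ioc_comp_int_add.summable).unique ?_
  exact hf.hasSum_setIntegral_Ioc_comp_int_add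

end Periodization

theorem integral_Ico_tsum_int_add_mul_exp_eq_fourier {f : ℝ → ℝ}
    (hf : Integrable fun x => (f x : ℂ)) (k : ℤ) :
    ∫ x in Ico (0 : ℝ) 1, ((∑' m : ℤ, f (m + x) : ℝ) : ℂ) *
        Complex.exp (-(2 * π * Complex.I * (k : ℂ) * (x : ℂ))) =
      𝓕 (fun x => (f x : ℂ)) k := by
  have hper (m : ℤ) (x : ℝ) : Complex.exp (-(2 * π * Complex.I * (k : ℂ) * (x : ℂ))) =
      𝐞 (-inner ℝ (m + x) (k : ℝ)) := by
    rw [Real.fourierChar_apply, RCLike.inner_apply, conj_trivial,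
      show (↑(2 * π * -((k : ℝ) * (m + x))) * Complex.I : ℂ) =
        -(2 * π * Complex.I * (k : ℂ) * (x : ℂ)) + ((-(m * k) : ℤ) : ℂ) * (2 * π * Complex.I) by
      push_cast; ring, Complex.exp_add, Complex.exp_int_mul_two_pi_mul_I, mul_one]
  have hF := (Real.fourierIntegral_convergent_iff (μ := volume) (k : ℝ)).2 hf
  rw [Real.fourier_eq]
  refine Eq.trans (setIntegral_congr_fun measurableSet_Ico fun x _ => ?_)
    hF.setIntegral_Ico_tsum_int_add
  rw [Complex.ofReal_tsum, ← tsum_mul_right]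
  exact tsum_congr fun m => by rw [hper m x, mul_comm]; rfl

section Indicator

variable {a b : ℝ}

theorem norm_fourier_indicator_Ico_le (hab : a ≤ b) (w : ℝ) :
    ‖𝓕 (fun x => ((Ico a b).indicator 1 x : ℂ)) w‖ ≤ b - a := by
  refine (VectorFourier.norm_fourierIntegral_le_integral_norm _ _ _ _ _).trans (le_of_eq ?_)
  simp [norm_indicator_eq_indicator_norm, integral_indicator measurableSet_Ico, hab]

theorem fourier_indicator_Ico (hab : a ≤ b) (w : ℝ) :
    𝓕 (fun x => ((Ico a b).indicator 1 x : ℂ)) w =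
      ∫ x in a..b, Complex.exp (↑(-2 * π * w) * Complex.I * x) := by
  rw [Real.fourier_real_eq_integral_exp_smul, intervalIntegral.integral_of_le hab,
    integral_Ioc_eq_integral_Ioo, ← integral_Ico_eq_integral_Ioo,
    ← integral_indicator measurableSet_Ico]
  congr with x
  by_cases hx : x ∈ Ico a b
  · simp only [hx, indicator_of_mem, Pi.one_apply, smul_eq_mul, mul_one]
    congr 1
    push_cast
    ring
  · simp [hx]

theorem norm_fourier_indicator_Ico_le_inv (hab : a ≤ b) {w : ℝ} (hw : w ≠ 0) :
    ‖𝓕 (fun x => ((Ico a b).indicator 1 x : ℂ)) w‖ ≤ 1 / (π * |w|) := by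
  set c : ℂ := ↑(-2 * π * w) * Complex.I
  have hc : ‖c‖ = 2 * (π * |w|) := by
    simp [c, abs_of_pos pi_pos, mul_assoc]
  have hexp (x : ℝ) : ‖Complex.exp (c * x)‖ = 1 := by
    rw [mul_right_comm, ← Complex.ofReal_mul, Complex.norm_exp_ofReal_mul_I]
  have hdiff : ‖Complex.exp (c * b) - Complex.exp (c * a)‖ ≤ 2 :=
    (norm_sub_le _ _).trans (by rw [hexp, hexp]; norm_num)
  have hc0 : c ≠ 0 := norm_pos_iff.1 (by rw [hc]; positivity)
  rw [fourier_indicator_Ico hab, integral_exp_mul_complex hc0, norm_div, hc]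
  calc _ ≤ 2 / (2 * (π * |w|)) := by gcongr
    _ = 1 / (π * |w|) := by field_simp

end Indicator

section HatFunction

variable (u : ℝ)

theorem ofReal_hFun_one : (fun x => (hFun u 1 x : ℂ)) = (Ico (-(u / 2)) (u / 2)).indicator 1 := by
  ext x
  simp only [hFun.eq_2, indicator_apply]
  split_ifs <;> simp

theorem ofReal_hFun_add_one {r : ℕ} (hr : r ≠ 0) :
    (fun x => (hFun u (r + 1) x : ℂ)) =
      (fun x => (hFun u r x : ℂ)) ⋆[ContinuousLinearMap.mul ℂ ℂ] fun x => (hFun u 1 x : ℂ) := by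
  obtain ⟨s, rfl⟩ := Nat.exists_eq_succ_of_ne_zero hr
  ext x
  rw [convolution_def, ← integral_sub_left_eq_self _ volume x]
  simp only [ContinuousLinearMap.mul_apply', sub_sub_cancel, ← Complex.ofReal_mul,
    integral_complex_ofReal, hFun.eq_3]

theorem integrable_ofReal_hFun : ∀ r, Integrable fun x => (hFun u r x : ℂ)
  | 0 => by simp [hFun]
  | 1 => by
    rw [ofReal_hFun_one]
    exact (integrable_indicator_iff measurableSet_Ico).2 (integrableOn_const measure_Ico_lt_top.ne)
  | r + 2 => by
    rw [ofReal_hFun_add_one u r.succ_ne_zero]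
    exact (integrable_ofReal_hFun (r + 1)).integrable_convolution _ (integrable_ofReal_hFun 1)

theorem fourier_ofReal_hFun {r : ℕ} (hr : r ≠ 0) (w : ℝ) :
    𝓕 (fun x => (hFun u r x : ℂ)) w = 𝓕 (fun x => (hFun u 1 x : ℂ)) w ^ r := by
  obtain ⟨r, rfl⟩ := Nat.exists_eq_add_one_of_ne_zero hr
  induction r with
  | zero => rw [zero_add, pow_one]
  | succ r ih =>
    rw [ofReal_hFun_add_one u r.succ_ne_zero, Real.fourier_mul_convolution_eq
      (integrable_ofReal_hFun u _) (integrable_ofReal_hFun u 1), ih r.succ_ne_zero, ← pow_succ]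

theorem norm_fourier_ofReal_hFun_le (r : ℕ) (w : ℝ) :
    ‖𝓕 (fun x => (hFun u r x : ℂ)) w‖ ≤ ‖𝓕 (fun x => (hFun u 1 x : ℂ)) w‖ ^ r := by
  rcases eq_or_ne r 0 with rfl | hr
  · simp [hFun, Real.fourier_eq]
  · rw [fourier_ofReal_hFun u hr, norm_pow]

variable {u}

theorem norm_fourier_ofReal_hFun_one_le (hu : 0 ≤ u) (w : ℝ) :
    ‖𝓕 (fun x => (hFun u 1 x : ℂ)) w‖ ≤ u := by
  simpa [ofReal_hFun_one] using norm_fourier_indicator_Ico_le (by linarith : -(u / 2) ≤ u / 2) w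

theorem norm_fourier_ofReal_hFun_one_le_inv (hu : 0 ≤ u) {w : ℝ} (hw : w ≠ 0) :
    ‖𝓕 (fun x => (hFun u 1 x : ℂ)) w‖ ≤ 1 / (π * |w|) := by
  rw [ofReal_hFun_one]
  exact norm_fourier_indicator_Ico_le_inv (by linarith) hw

end HatFunction

theorem periodized_hFun_fourierCoeff_bound_general (r : ℕ) (u : ℝ)
    (hu0 : 0 < u) (k : ℤ) :
    ‖∫ x in Set.Ico (0 : ℝ) 1,
        ((∑' m : ℤ, hFun u r ((m : ℝ) + x) : ℝ) : ℂ) *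
          Complex.exp (-(2 * Real.pi * Complex.I * (k : ℂ) * (x : ℂ)))‖ ≤
      if k = 0 then u ^ r else min (u ^ r) (1 / |(k : ℝ)| ^ r) := by
  rw [integral_Ico_tsum_int_add_mul_exp_eq_fourier (integrable_ofReal_hFun u r)]
  refine (norm_fourier_ofReal_hFun_le u r k).trans ?_
  have h_u := norm_fourier_ofReal_hFun_one_le hu0.le (k : ℝ)
  split_ifs with hk
  · exact pow_le_pow_left₀ (norm_nonneg _) h_u r
  · have hk' : (0 : ℝ) < |(k : ℝ)| := abs_pos.2 (Int.cast_ne_zero.2 hk)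
    have h_inv : ‖𝓕 (fun x => (hFun u 1 x : ℂ)) k‖ ≤ 1 / |(k : ℝ)| :=
      (norm_fourier_ofReal_hFun_one_le_inv hu0.le (Int.cast_ne_zero.2 hk)).trans
        (one_div_le_one_div_of_le hk' (le_mul_of_one_le_left hk'.le (by linarith [pi_gt_three])))
    rw [← one_div_pow]
    exact le_min (pow_le_pow_left₀ (norm_nonneg _) h_u r) (pow_le_pow_left₀ (norm_nonneg _) h_inv r)

/-- The Fourier coefficients of the periodization of `h^r_u` satisfy
`|ĥ̃^r_u(k)| ≤ min(u^r, 1/|k|^r)` (with right-hand side `u^r` for `k = 0`). -/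
theorem periodized_hFun_fourierCoeff_bound (r : ℕ) (hr : 1 ≤ r) (u : ℝ)
    (hu0 : 0 < u) (hu1 : u ≤ 1) (k : ℤ) :
    ‖∫ x in Set.Ico (0 : ℝ) 1,
        ((∑' m : ℤ, hFun u r ((m : ℝ) + x) : ℝ) : ℂ) *
          Complex.exp (-(2 * Real.pi * Complex.I * (k : ℂ) * (x : ℂ)))‖ ≤
      if k = 0 then u ^ r else min (u ^ r) (1 / |(k : ℝ)| ^ r) :=
  periodized_hFun_fourierCoeff_bound_general r u hu0 k

end
end

section
/- Let r ≥ 1, d ≥ 1, and let B = ∏_{j=1}^d [z_j − r u_j/2, z_j + r u_j/2) ⊂ [0,1)^d be a box with u ∈ (0,1/2]^d and v = vol(B) = r^d ∏_j u_j. Define H_B^r(s) = (∏_j u_j / 2^{‖s‖_1})^{r/2} · ∏_{j=1}^d min((2^{s_j} u_j)^{r/2}, (2^{s_j} u_j)^{−r/2}) for s ∈ ℕ_0^d. Then there is a constant C_1(d) such that for all t ∈ ℕ_0 with v ≥ r^d · 2^{−t+1}, one has Σ_{s ∈ ℕ_0^d, ‖s‖_1 = t} H_B^r(s)² ≤ C_1(d)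 · 2^{−2rt} · (log(2^t v))^{d−1}. -/
open MeasureTheory Real

noncomputable section

set_option maxHeartbeats 1600000

section AuxHB
open Finset

lemma geom_half_partial (F : Finset ℕ) : ∑ k ∈ F, ((2:ℝ)⁻¹)^k ≤ 2 := by
  have h := Summable.sum_le_tsum (f := fun k : ℕ => ((2:ℝ)⁻¹)^k) F (fun i _ => by positivity)
    (summable_geometric_of_lt_one (by norm_num) (by norm_num))
  rw [tsum_geometric_of_lt_one (by norm_num) (by norm_num)] at h
  have : ((1:ℝ) - 2⁻¹)⁻¹ = 2 := by norm_num
  rw [this] at h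
  exact h

lemma geom_poly (p : ℕ) : ∃ c : ℝ, 0 < c ∧ ∀ F : Finset ℕ,
    ∑ k ∈ F, ((2:ℝ)⁻¹)^k * ((k:ℝ)+1)^p ≤ c := by
  have hs : Summable (fun k : ℕ => ((2:ℝ)⁻¹)^k * ((k:ℝ)+1)^p) := by
    have h1 : Summable (fun k : ℕ => ((k:ℝ))^p * (2⁻¹)^k) :=
      summable_pow_mul_geometric_of_norm_lt_one p (by norm_num)
    have h2 := ((summable_nat_add_iff 1).2 h1).mul_left 2
    refine h2.congr fun k => ?_
    push_cast; ring
  refine ⟨(∑' k : ℕ, ((2:ℝ)⁻¹)^k * ((k:ℝ)+1)^p) + 1, ?_, fun F => ?_⟩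
  · have : (0:ℝ) ≤ ∑' k : ℕ, ((2:ℝ)⁻¹)^k * ((k:ℝ)+1)^p :=
      tsum_nonneg fun k => by positivity
    linarith
  · have := Summable.sum_le_tsum (f := fun k : ℕ => ((2:ℝ)⁻¹)^k * ((k:ℝ)+1)^p) F
      (fun i _ => by positivity) hs
    linarith

lemma sum_adT_succ (d t : ℕ) (f : (Fin (d+1) → ℕ) → ℝ) :
    ∑ s ∈ Finset.Nat.antidiagonalTuple (d+1) t, f s
      = ∑ a ∈ range (t+1), ∑ s' ∈ Finset.Nat.antidiagonalTuple d (t-a), f (Fin.cons a s') := by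
  rw [Finset.sum_sigma']
  refine Finset.sum_nbij' (i := fun s => ⟨s 0, Fin.tail s⟩) (j := fun q => Fin.cons q.1 q.2) ?_ ?_ ?_ ?_ ?_
  · intro s hs
    rw [Finset.Nat.mem_antidiagonalTuple] at hs
    rw [Fin.sum_univ_succ] at hs
    simp only [Finset.mem_sigma, Finset.mem_range, Finset.Nat.mem_antidiagonalTuple]
    refine ⟨by omega, ?_⟩
    simp only [Fin.tail]
    omega
  · intro q hq
    simp only [Finset.mem_sigma, Finset.mem_range, Finset.Nat.mem_antidiagonalTuple] at hq
    rw [Finset.Nat.mem_antidiagonalTuple, Fin.sum_univ_succ]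
    simp only [Fin.cons_zero, Fin.cons_succ]
    omega
  · intro s hs; exact Fin.cons_self_tail s
  · intro q hq; simp [Fin.tail_cons]
  · intro s hs; rw [Fin.cons_self_tail]

lemma keyStep (p : ℕ) : ∃ K : ℝ, 0 < K ∧ ∀ m0 S t : ℕ,
    ∑ a ∈ range (t+1), ((4:ℝ)⁻¹)^(m0 - a) *
        (((2:ℝ)⁻¹)^(S - (t - a)) * (((t - a - S : ℕ):ℝ)+1)^p)
      ≤ K * ((2:ℝ)⁻¹)^((m0+S) - t) * (((t - (m0+S) : ℕ):ℝ)+1)^(p+1) := by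
  obtain ⟨c, hc, hcF⟩ := geom_poly p
  refine ⟨c + 3, by linarith, fun m0 S t => ?_⟩
  set M := t - (m0 + S) with hM
  set X := (m0 + S) - t with hX
  set w : ℕ → ℝ := fun a => if a ≤ m0 then ((2:ℝ)⁻¹)^(m0-a) * (((m0-a:ℕ):ℝ)+1)^p
    else ((2:ℝ)⁻¹)^((a - m0) - M) with hw
  have hhalf : (0:ℝ) ≤ 2⁻¹ ∧ ((2:ℝ)⁻¹) ≤ 1 := by norm_num
  have hterm : ∀ a ∈ range (t+1), ((4:ℝ)⁻¹)^(m0 - a) *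
      (((2:ℝ)⁻¹)^(S - (t - a)) * (((t - a - S : ℕ):ℝ)+1)^p)
      ≤ (((2:ℝ)⁻¹)^X * (((M:ℕ):ℝ)+1)^p) * w a := by
    intro a ha
    rw [mem_range] at ha
    have hat : a ≤ t := by omega
    rw [show ((4:ℝ)⁻¹) = ((2:ℝ)⁻¹)^2 by norm_num, ← pow_mul]
    by_cases ham : a ≤ m0
    · simp only [hw, if_pos ham]
      have h1 : ((2:ℝ)⁻¹)^(2*(m0-a)) * ((2:ℝ)⁻¹)^(S-(t-a)) ≤ ((2:ℝ)⁻¹)^(X + (m0-a)) := by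
        rw [← pow_add]
        exact pow_le_pow_of_le_one hhalf.1 hhalf.2 (by omega)
      have h2 : (((t-a-S:ℕ):ℝ)+1)^p ≤ ((((M:ℕ):ℝ)+1)*(((m0-a:ℕ):ℝ)+1))^p := by
        apply pow_le_pow_left₀ (by positivity)
        have hn : (t-a-S) ≤ M + (m0-a) := by omega
        have hc1 : ((t-a-S:ℕ):ℝ) ≤ ((M:ℕ):ℝ) + ((m0-a:ℕ):ℝ) := by
          push_cast; exact_mod_cast Nat.cast_le.2 hn
        have c2 : (0:ℝ) ≤ ((M:ℕ):ℝ) := Nat.cast_nonneg _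
        have c3 : (0:ℝ) ≤ ((m0-a:ℕ):ℝ) := Nat.cast_nonneg _
        nlinarith
      calc ((2:ℝ)⁻¹)^(2*(m0-a)) * (((2:ℝ)⁻¹)^(S-(t-a)) * (((t-a-S:ℕ):ℝ)+1)^p)
          = (((2:ℝ)⁻¹)^(2*(m0-a)) * ((2:ℝ)⁻¹)^(S-(t-a))) * (((t-a-S:ℕ):ℝ)+1)^p := by ring
        _ ≤ ((2:ℝ)⁻¹)^(X + (m0-a)) * ((((M:ℕ):ℝ)+1)*(((m0-a:ℕ):ℝ)+1))^p := by
            apply mul_le_mul h1 h2 (by positivity) (by positivity)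
        _ = (((2:ℝ)⁻¹)^X * (((M:ℕ):ℝ)+1)^p) * (((2:ℝ)⁻¹)^(m0-a) * (((m0-a:ℕ):ℝ)+1)^p) := by
            rw [pow_add, mul_pow]; ring
    · simp only [hw, if_neg ham]
      have hz : m0 - a = 0 := by omega
      rw [hz]
      have h1 : ((2:ℝ)⁻¹)^(S-(t-a)) ≤ ((2:ℝ)⁻¹)^(X + ((a-m0)-M)) :=
        pow_le_pow_of_le_one hhalf.1 hhalf.2 (by omega)
      have h2 : (((t-a-S:ℕ):ℝ)+1)^p ≤ (((M:ℕ):ℝ)+1)^p := by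
        apply pow_le_pow_left₀ (by positivity)
        have hn : (t-a-S) ≤ M := by omega
        have := (Nat.cast_le (α := ℝ)).2 hn
        linarith
      calc ((2:ℝ)⁻¹)^(2*0) * (((2:ℝ)⁻¹)^(S-(t-a)) * (((t-a-S:ℕ):ℝ)+1)^p)
          = ((2:ℝ)⁻¹)^(S-(t-a)) * (((t-a-S:ℕ):ℝ)+1)^p := by ring
        _ ≤ ((2:ℝ)⁻¹)^(X + ((a-m0)-M)) * (((M:ℕ):ℝ)+1)^p := by
            apply mul_le_mul h1 h2 (by positivity) (by positivity)
        _ = (((2:ℝ)⁻¹)^X * (((M:ℕ):ℝ)+1)^p) * ((2:ℝ)⁻¹)^((a-m0)-M) := by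
            rw [pow_add]; ring
  have hsum : ∑ a ∈ range (t+1), w a ≤ c + (((M:ℕ):ℝ) + 3) := by
    rw [← Finset.sum_filter_add_sum_filter_not (range (t+1)) (· ≤ m0)]
    have hp1 : ∑ a ∈ (range (t+1)).filter (· ≤ m0), w a ≤ c := by
      have hinj : ∀ x ∈ (range (t+1)).filter (· ≤ m0), ∀ y ∈ (range (t+1)).filter (· ≤ m0),
          m0 - x = m0 - y → x = y := by
        intro x hx y hy hxy
        rw [mem_filter] at hx hy
        omega
      have he : ∑ k ∈ ((range (t+1)).filter (· ≤ m0)).image (fun a => m0 - a),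
            ((2:ℝ)⁻¹)^k * (((k:ℕ):ℝ)+1)^p
          = ∑ a ∈ (range (t+1)).filter (· ≤ m0),
              ((2:ℝ)⁻¹)^(m0 - a) * (((m0 - a:ℕ):ℝ)+1)^p :=
        Finset.sum_image (f := fun k => ((2:ℝ)⁻¹)^k * (((k:ℕ):ℝ)+1)^p) hinj
      have he2 : ∑ a ∈ (range (t+1)).filter (· ≤ m0), w a
          = ∑ a ∈ (range (t+1)).filter (· ≤ m0),
              ((2:ℝ)⁻¹)^(m0 - a) * (((m0 - a:ℕ):ℝ)+1)^p := by
        refine Finset.sum_congr rfl fun a ha => ?_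
        rw [mem_filter] at ha
        simp only [hw, if_pos ha.2]
      rw [he2, ← he]
      exact hcF _
    have hp2 : ∑ a ∈ (range (t+1)).filter (fun a => ¬ a ≤ m0), w a ≤ ((M:ℕ):ℝ) + 3 := by
      have hinj : ∀ x ∈ (range (t+1)).filter (fun a => ¬ a ≤ m0),
          ∀ y ∈ (range (t+1)).filter (fun a => ¬ a ≤ m0), x - m0 = y - m0 → x = y := by
        intro x hx y hy hxy
        rw [mem_filter] at hx hy
        omega
      have he : ∑ e ∈ ((range (t+1)).filter (fun a => ¬ a ≤ m0)).image (fun a => a - m0),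
            ((2:ℝ)⁻¹)^(e - M)
          = ∑ a ∈ (range (t+1)).filter (fun a => ¬ a ≤ m0), ((2:ℝ)⁻¹)^((a - m0) - M) :=
        Finset.sum_image (f := fun e => ((2:ℝ)⁻¹)^(e - M)) hinj
      have he2 : ∑ a ∈ (range (t+1)).filter (fun a => ¬ a ≤ m0), w a
          = ∑ a ∈ (range (t+1)).filter (fun a => ¬ a ≤ m0), ((2:ℝ)⁻¹)^((a - m0) - M) := by
        refine Finset.sum_congr rfl fun a ha => ?_
        rw [mem_filter] at ha
        simp only [hw, if_neg ha.2]
      rw [he2, ← he]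
      set F2 := ((range (t+1)).filter (fun a => ¬ a ≤ m0)).image (fun a => a - m0) with hF2
      rw [← Finset.sum_filter_add_sum_filter_not F2 (· ≤ M)]
      have hq1 : ∑ e ∈ F2.filter (· ≤ M), ((2:ℝ)⁻¹)^(e - M) ≤ ((M:ℕ):ℝ) + 1 := by
        calc ∑ e ∈ F2.filter (· ≤ M), ((2:ℝ)⁻¹)^(e - M)
            ≤ ∑ _e ∈ F2.filter (· ≤ M), (1:ℝ) := by
              refine Finset.sum_le_sum fun e he => ?_
              exact pow_le_one₀ (by norm_num) (by norm_num)
          _ = (F2.filter (· ≤ M)).card := by rw [Finset.sum_const, nsmul_eq_mul, mul_one]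
          _ ≤ ((M:ℕ):ℝ) + 1 := by
              have hsub : F2.filter (· ≤ M) ⊆ range (M+1) := by
                intro e he
                rw [mem_filter] at he
                rw [mem_range]; omega
              have := Finset.card_le_card hsub
              rw [Finset.card_range] at this
              exact_mod_cast this
      have hq2 : ∑ e ∈ F2.filter (fun e => ¬ e ≤ M), ((2:ℝ)⁻¹)^(e - M) ≤ 2 := by
        have hinj2 : ∀ x ∈ F2.filter (fun e => ¬ e ≤ M), ∀ y ∈ F2.filter (fun e => ¬ e ≤ M),
            x - M = y - M → x = y := by
          intro x hx y hy hxy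
          rw [mem_filter] at hx hy
          omega
        have he2 : ∑ k ∈ (F2.filter (fun e => ¬ e ≤ M)).image (fun e => e - M), ((2:ℝ)⁻¹)^k
            = ∑ e ∈ F2.filter (fun e => ¬ e ≤ M), ((2:ℝ)⁻¹)^(e - M) :=
          Finset.sum_image (f := fun k => ((2:ℝ)⁻¹)^k) hinj2
        rw [← he2]
        exact geom_half_partial _
      linarith
    linarith
  calc ∑ a ∈ range (t+1), ((4:ℝ)⁻¹)^(m0 - a) *
        (((2:ℝ)⁻¹)^(S - (t - a)) * (((t - a - S : ℕ):ℝ)+1)^p)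
      ≤ ∑ a ∈ range (t+1), (((2:ℝ)⁻¹)^X * (((M:ℕ):ℝ)+1)^p) * w a :=
        Finset.sum_le_sum hterm
    _ = (((2:ℝ)⁻¹)^X * (((M:ℕ):ℝ)+1)^p) * ∑ a ∈ range (t+1), w a := by
        rw [Finset.mul_sum]
    _ ≤ (((2:ℝ)⁻¹)^X * (((M:ℕ):ℝ)+1)^p) * (c + (((M:ℕ):ℝ) + 3)) := by
        apply mul_le_mul_of_nonneg_left hsum (by positivity)
    _ ≤ (c + 3) * ((2:ℝ)⁻¹)^X * ((((M:ℕ):ℝ)+1))^(p+1) := by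
        rw [pow_succ]
        have hMn : (0:ℝ) ≤ ((M:ℕ):ℝ) := Nat.cast_nonneg _
        have h1 : c + (((M:ℕ):ℝ) + 3) ≤ (c + 3) * (((M:ℕ):ℝ) + 1) := by nlinarith
        have h2 : (0:ℝ) ≤ ((2:ℝ)⁻¹)^X * (((M:ℕ):ℝ)+1)^p := by positivity
        nlinarith [pow_nonneg (show (0:ℝ) ≤ 2⁻¹ by norm_num) X,
          pow_nonneg (show (0:ℝ) ≤ ((M:ℕ):ℝ)+1 by positivity) p]

lemma lemB (d : ℕ) (hd : 1 ≤ d) : ∃ C : ℝ, 0 < C ∧ ∀ (m : Fin d → ℕ) (t : ℕ),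
    ∑ s ∈ Finset.Nat.antidiagonalTuple d t, ∏ j, ((4:ℝ)⁻¹)^(m j - s j)
      ≤ C * ((2:ℝ)⁻¹)^((∑ j, m j) - t) * (((t - ∑ j, m j : ℕ):ℝ)+1)^(d-1) := by
  induction d, hd using Nat.le_induction with
  | base =>
    refine ⟨1, one_pos, fun m t => ?_⟩
    rw [Finset.Nat.antidiagonalTuple_one, Finset.sum_singleton, Fin.prod_univ_one,
      Fin.sum_univ_one]
    simp only [Matrix.cons_val_zero]
    have h1 : ((4:ℝ)⁻¹)^(m 0 - t) ≤ ((2:ℝ)⁻¹)^(m 0 - t) :=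
      pow_le_pow_left₀ (by norm_num) (by norm_num) _
    calc ((4:ℝ)⁻¹)^(m 0 - t) ≤ ((2:ℝ)⁻¹)^(m 0 - t) := h1
      _ = 1 * ((2:ℝ)⁻¹)^(m 0 - t) * (((t - m 0 : ℕ):ℝ)+1)^(1-1) := by
          norm_num
  | succ d hd1 ih =>
    obtain ⟨C, hC, hCb⟩ := ih
    obtain ⟨K, hK, hKb⟩ := keyStep (d-1)
    refine ⟨C * K, by positivity, fun m t => ?_⟩
    rw [sum_adT_succ]
    set S := ∑ j : Fin d, m j.succ with hS
    have hsplit : ∑ j : Fin (d+1), m j = m 0 + S := Fin.sum_univ_succ m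
    have hd0 : (d - 1) + 1 = d := by omega
    calc ∑ a ∈ range (t+1), ∑ s' ∈ Finset.Nat.antidiagonalTuple d (t-a),
          ∏ j : Fin (d+1), ((4:ℝ)⁻¹)^(m j - (Fin.cons a s' : Fin (d+1) → ℕ) j)
        = ∑ a ∈ range (t+1), ((4:ℝ)⁻¹)^(m 0 - a) *
            ∑ s' ∈ Finset.Nat.antidiagonalTuple d (t-a),
              ∏ j : Fin d, ((4:ℝ)⁻¹)^(m j.succ - s' j) := by
          refine Finset.sum_congr rfl fun a _ => ?_
          rw [Finset.mul_sum]
          refine Finset.sum_congr rfl fun s' _ => ?_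
          rw [Fin.prod_univ_succ]
          simp only [Fin.cons_zero, Fin.cons_succ]
      _ ≤ ∑ a ∈ range (t+1), ((4:ℝ)⁻¹)^(m 0 - a) *
            (C * (((2:ℝ)⁻¹)^(S - (t-a)) * ((((t-a) - S : ℕ):ℝ)+1)^(d-1))) := by
          refine Finset.sum_le_sum fun a _ => ?_
          refine mul_le_mul_of_nonneg_left ?_ (by positivity)
          have := hCb (fun j => m j.succ) (t - a)
          calc ∑ s' ∈ Finset.Nat.antidiagonalTuple d (t-a),
                ∏ j : Fin d, ((4:ℝ)⁻¹)^(m j.succ - s' j)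
              ≤ C * ((2:ℝ)⁻¹)^(S - (t-a)) * ((((t-a) - S : ℕ):ℝ)+1)^(d-1) := this
            _ = C * (((2:ℝ)⁻¹)^(S - (t-a)) * ((((t-a) - S : ℕ):ℝ)+1)^(d-1)) := by ring
      _ = C * ∑ a ∈ range (t+1), ((4:ℝ)⁻¹)^(m 0 - a) *
            (((2:ℝ)⁻¹)^(S - (t-a)) * ((((t-a) - S : ℕ):ℝ)+1)^(d-1)) := by
          rw [Finset.mul_sum]
          refine Finset.sum_congr rfl fun a _ => by ring
      _ ≤ C * (K * ((2:ℝ)⁻¹)^((m 0 + S) - t) * (((t - (m 0 + S) : ℕ):ℝ)+1)^((d-1)+1)) :=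
          mul_le_mul_of_nonneg_left (hKb (m 0) S t) hC.le
      _ = C * K * ((2:ℝ)⁻¹)^((∑ j, m j) - t) * (((t - ∑ j, m j : ℕ):ℝ)+1)^((d+1)-1) := by
          rw [hsplit, hd0]
          have : (d + 1) - 1 = d := by omega
          rw [this]
          ring

lemma min_sq (a r : ℝ) (ha : 0 < a) (hr : 1 ≤ r) :
    (min (a^(r/2)) (a^(-(r/2))))^2 ≤ a^(-r) * min (a*a) 1 := by
  rcases le_or_gt a 1 with ha1 | ha1
  · have hmin : min (a^(r/2)) (a^(-(r/2))) = a^(r/2) :=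
      min_eq_left (Real.rpow_le_rpow_of_exponent_ge ha ha1 (by linarith))
    have hmin2 : min (a*a) 1 = a*a := min_eq_left (by nlinarith)
    rw [hmin, hmin2]
    have hsq : (a^(r/2))^2 = a^r := by
      rw [← Real.rpow_natCast (a^(r/2)) 2, ← Real.rpow_mul ha.le]
      norm_num
    rw [hsq]
    have haa : a * a = a^(2:ℝ) := by
      rw [show (2:ℝ) = ((2:ℕ):ℝ) by norm_num, Real.rpow_natCast]; ring
    rw [haa, ← Real.rpow_add ha]
    exact Real.rpow_le_rpow_of_exponent_ge ha ha1 (by linarith)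
  · have hmin : min (a^(r/2)) (a^(-(r/2))) = a^(-(r/2)) :=
      min_eq_right (Real.rpow_le_rpow_of_exponent_le ha1.le (by linarith))
    have hmin2 : min (a*a) 1 = 1 := min_eq_right (by nlinarith)
    rw [hmin, hmin2, mul_one]
    have hsq : (a^(-(r/2)))^2 = a^(-r) := by
      rw [← Real.rpow_natCast (a^(-(r/2))) 2, ← Real.rpow_mul ha.le]
      norm_num
    rw [hsq]

lemma min_quarter (u : ℝ) (hu0 : 0 < u) (hu2 : u ≤ 1/2) (s : ℕ) :
    min (((2:ℝ)^s * u) * ((2:ℝ)^s * u)) 1 ≤ ((4:ℝ)⁻¹)^(Nat.log 2 ⌊u⁻¹⌋₊ - s) := by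
  set m := Nat.log 2 ⌊u⁻¹⌋₊ with hm
  rcases le_or_gt s m with hsm | hsm
  · have hn2 : 2 ≤ ⌊u⁻¹⌋₊ := Nat.le_floor (by
      rw [Nat.cast_ofNat, ← one_div]
      rw [le_div_iff₀ hu0]
      linarith)
    have hA : (2:ℝ)^m ≤ u⁻¹ := by
      calc (2:ℝ)^m = ((2^m : ℕ):ℝ) := by push_cast; ring
        _ ≤ (⌊u⁻¹⌋₊ : ℝ) := by
            exact_mod_cast Nat.pow_log_le_self 2 (by omega)
        _ ≤ u⁻¹ := Nat.floor_le (by positivity)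
    have hu' : u ≤ ((2:ℝ)^m)⁻¹ := by
      rw [← one_div, le_div_iff₀ (by positivity)]
      rw [← one_div, le_div_iff₀ hu0] at hA
      linarith [hA]
    have hx : (2:ℝ)^s * u ≤ ((2:ℝ)^(m-s))⁻¹ := by
      have hm' : (2:ℝ)^m = (2:ℝ)^(m-s) * (2:ℝ)^s := by
        rw [← pow_add]; congr 1; omega
      calc (2:ℝ)^s * u ≤ (2:ℝ)^s * ((2:ℝ)^m)⁻¹ :=
            mul_le_mul_of_nonneg_left hu' (by positivity)
        _ = ((2:ℝ)^(m-s))⁻¹ := by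
            rw [hm', mul_inv]
            field_simp
    have hx0 : 0 < (2:ℝ)^s * u := by positivity
    calc min (((2:ℝ)^s * u) * ((2:ℝ)^s * u)) 1 ≤ ((2:ℝ)^s * u) * ((2:ℝ)^s * u) :=
          min_le_left _ _
      _ ≤ ((2:ℝ)^(m-s))⁻¹ * ((2:ℝ)^(m-s))⁻¹ := by nlinarith
      _ = ((4:ℝ)⁻¹)^(m-s) := by
          rw [← mul_inv, ← mul_pow, show ((2:ℝ)*2) = 4 by norm_num, inv_pow]
  · have : m - s = 0 := by omega
    rw [this, pow_zero]
    exact min_le_right _ _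

lemma floor_log_lower (u : ℝ) (hu0 : 0 < u) :
    ((2:ℝ)^(Nat.log 2 ⌊u⁻¹⌋₊ + 1))⁻¹ ≤ u := by
  set m := Nat.log 2 ⌊u⁻¹⌋₊
  have h1 : u⁻¹ < (⌊u⁻¹⌋₊ : ℝ) + 1 := Nat.lt_floor_add_one _
  have h2 : ⌊u⁻¹⌋₊ < 2^(m+1) := Nat.lt_pow_succ_log_self (by norm_num) _
  have h3 : u⁻¹ < (2:ℝ)^(m+1) := by
    have : ((⌊u⁻¹⌋₊ : ℝ) + 1) ≤ ((2^(m+1) : ℕ) : ℝ) := by exact_mod_cast h2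
    push_cast at this
    linarith
  rw [inv_le_iff_one_le_mul₀ (by positivity)]
  rw [inv_lt_iff_one_lt_mul₀ hu0] at h3
  linarith

end AuxHB

/-- The bound `∑_{‖s‖₁ = t} H_B^r(s)² ≤ C₁(d) 2^{-2rt} (log(2^t v))^{d-1}` for boxes
`B ⊆ [0,1)^d` of volume `v = r^d ∏ u_j ≥ r^d 2^{-t+1}`. -/
theorem HB_square_sum_bound (d : ℕ) (hd : 1 ≤ d) :
    ∃ C₁ : ℝ, 0 < C₁ ∧
      ∀ r : ℝ, 1 ≤ r → ∀ zB u : Fin d → ℝ,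
        (∀ j, 0 < u j) → (∀ j, u j ≤ 1 / 2) →
        (Set.univ.pi fun j => Set.Ico (zB j - r * u j / 2) (zB j + r * u j / 2)) ⊆
          unitCube d →
        ∀ t : ℕ, r ^ d * 2 / 2 ^ t ≤ r ^ d * ∏ j, u j →
          ∑ s ∈ Finset.Nat.antidiagonalTuple d t,
              (((∏ j, u j) / 2 ^ (∑ j, s j)) ^ (r / 2) *
                ∏ j, min ((2 ^ s j * u j) ^ (r / 2)) ((2 ^ s j * u j) ^ (-(r / 2)))) ^ 2 ≤
            C₁ * (2 : ℝ) ^ (-(2 * r * (t : ℝ))) *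
              Real.log (2 ^ t * (r ^ d * ∏ j, u j)) ^ (d - 1) := by
  obtain ⟨C, hC, hCb⟩ := lemB d hd
  have hlog2 : (0:ℝ) < Real.log 2 := Real.log_pos (by norm_num)
  refine ⟨C * (((d:ℝ)+2)/Real.log 2)^(d-1), by positivity, ?_⟩
  intro r hr zB u hu0 hu2 _hsub t hv
  set P := ∏ j, u j with hP
  set v := r ^ d * P with hv'
  set m : Fin d → ℕ := fun j => Nat.log 2 ⌊(u j)⁻¹⌋₊ with hm
  have hP0 : 0 < P := Finset.prod_pos fun j _ => hu0 j
  have hr0 : (0:ℝ) < r := by linarith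
  have hrd1 : (1:ℝ) ≤ r ^ d := one_le_pow₀ hr
  -- 2 ≤ 2^t * P
  have h2tP : (2:ℝ) ≤ 2^t * P := by
    have h2t : (0:ℝ) < (2:ℝ)^t := by positivity
    rw [div_le_iff₀ h2t] at hv
    have hrd0 : (0:ℝ) < r ^ d := by positivity
    nlinarith
  have h2tv : (2:ℝ) ≤ 2^t * v := by
    have : (2:ℝ)^t * P ≤ 2^t * v := by
      rw [hv']
      have h2t : (0:ℝ) < (2:ℝ)^t := by positivity
      nlinarith
    linarith
  set L := Real.log (2^t * v) with hL
  have hL2 : Real.log 2 ≤ L := Real.log_le_log (by norm_num) h2tv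
  have hL0 : 0 < L := lt_of_lt_of_le hlog2 hL2
  -- log lower bound on P
  have hPbound : ((2:ℝ)^(∑ j, m j + d))⁻¹ ≤ P := by
    have hple : ∏ j, ((2:ℝ)^(m j + 1))⁻¹ ≤ P :=
      Finset.prod_le_prod (fun j _ => by positivity)
        (fun j _ => floor_log_lower (u j) (hu0 j))
    calc ((2:ℝ)^(∑ j, m j + d))⁻¹ = ∏ j, ((2:ℝ)^(m j + 1))⁻¹ := by
          rw [Finset.prod_inv_distrib]
          congr 1
          rw [Finset.prod_pow_eq_pow_sum]
          congr 1
          rw [Finset.sum_add_distrib, Finset.sum_const, Finset.card_univ, Fintype.card_fin,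
            smul_eq_mul, mul_one]
      _ ≤ P := hple
  -- the key count bound
  have hLdiv : (1:ℝ) ≤ L / Real.log 2 := (one_le_div hlog2).2 hL2
  have hcount : (((t - ∑ j, m j : ℕ):ℝ)+1) ≤ (((d:ℝ)+2)/Real.log 2) * L := by
    have hrhs : (((d:ℝ)+2)/Real.log 2) * L = ((d:ℝ)+2) * (L / Real.log 2) := by ring
    rw [hrhs]
    rcases le_or_gt t (∑ j, m j) with hts | hts
    · have h0 : t - ∑ j, m j = 0 := by omega
      rw [h0]
      norm_num
      nlinarith [Nat.cast_nonneg (α := ℝ) d]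
    · have hcast : ((t - ∑ j, m j : ℕ):ℝ) = (t:ℝ) - ((∑ j, m j : ℕ):ℝ) := by
        rw [Nat.cast_sub (by omega)]
      have hlogP : (t:ℝ) * Real.log 2 - (((∑ j, m j : ℕ):ℝ) + (d:ℝ)) * Real.log 2 ≤ L := by
        have hp1 : (2:ℝ)^t * ((2:ℝ)^(∑ j, m j + d))⁻¹ ≤ 2^t * P :=
          mul_le_mul_of_nonneg_left hPbound (by positivity)
        have hp2 : (2:ℝ)^t * P ≤ 2^t * v := by
          rw [hv']
          have h2t : (0:ℝ) < (2:ℝ)^t := by positivity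
          nlinarith
        have hl1 : Real.log ((2:ℝ)^t * ((2:ℝ)^(∑ j, m j + d))⁻¹) ≤ L := by
          rw [hL]
          apply Real.log_le_log (by positivity)
          linarith
        rw [Real.log_mul (by positivity) (by positivity), Real.log_inv, Real.log_pow,
          Real.log_pow] at hl1
        push_cast at hl1 ⊢
        nlinarith
      have hstep : ((t - ∑ j, m j : ℕ):ℝ) + 1 ≤ L / Real.log 2 + ((d:ℝ) + 1) := by
        rw [hcast]
        rw [div_add' _ _ _ (ne_of_gt hlog2), le_div_iff₀ hlog2]
        nlinarith
      calc ((t - ∑ j, m j : ℕ):ℝ) + 1 ≤ L / Real.log 2 + ((d:ℝ) + 1) := hstep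
        _ ≤ L / Real.log 2 + ((d:ℝ) + 1) * (L / Real.log 2) := by nlinarith [Nat.cast_nonneg (α := ℝ) d]
        _ = ((d:ℝ)+2) * (L / Real.log 2) := by ring
  -- pointwise bound on each term of the sum
  have hterm : ∀ s ∈ Finset.Nat.antidiagonalTuple d t,
      ((P / 2 ^ (∑ j, s j)) ^ (r / 2) *
          ∏ j, min ((2 ^ s j * u j) ^ (r / 2)) ((2 ^ s j * u j) ^ (-(r / 2)))) ^ 2
        ≤ (2:ℝ) ^ (-(2 * r * (t:ℝ))) * ∏ j, ((4:ℝ)⁻¹)^(m j - s j) := by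
    intro s hs
    have hst : ∑ j, s j = t := Finset.Nat.mem_antidiagonalTuple.1 hs
    rw [hst]
    have ha0 : ∀ j, (0:ℝ) < 2 ^ s j * u j := fun j => mul_pos (by positivity) (hu0 j)
    rw [mul_pow]
    have h1 : (((P / 2^t) ^ (r/2)) : ℝ)^2 = (P / 2^t) ^ r := by
      rw [← Real.rpow_natCast ((P / 2^t) ^ (r/2)) 2, ← Real.rpow_mul (by positivity)]
      norm_num
    rw [h1, ← Finset.prod_pow]
    have h2 : ∀ j ∈ Finset.univ (α := Fin d),
        (min ((2 ^ s j * u j) ^ (r / 2)) ((2 ^ s j * u j) ^ (-(r / 2))))^2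
          ≤ (2 ^ s j * u j) ^ (-r) * ((4:ℝ)⁻¹)^(m j - s j) := by
      intro j _
      calc (min ((2 ^ s j * u j) ^ (r / 2)) ((2 ^ s j * u j) ^ (-(r / 2))))^2
          ≤ (2 ^ s j * u j) ^ (-r) * min ((2 ^ s j * u j) * (2 ^ s j * u j)) 1 :=
            min_sq _ r (ha0 j) hr
        _ ≤ (2 ^ s j * u j) ^ (-r) * ((4:ℝ)⁻¹)^(m j - s j) := by
            exact mul_le_mul_of_nonneg_left (min_quarter (u j) (hu0 j) (hu2 j) (s j))
              (Real.rpow_nonneg (ha0 j).le _)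
    have h3 : ∏ j, (min ((2 ^ s j * u j) ^ (r / 2)) ((2 ^ s j * u j) ^ (-(r / 2))))^2
        ≤ ∏ j, ((2 ^ s j * u j) ^ (-r) * ((4:ℝ)⁻¹)^(m j - s j)) :=
      Finset.prod_le_prod (fun j _ => sq_nonneg _) h2
    have h4 : ∏ j, ((2:ℝ) ^ s j * u j) ^ (-r) = ((2:ℝ)^t * P) ^ (-r) := by
      rw [Real.finset_prod_rpow _ _ (fun j _ => (ha0 j).le)]
      congr 1
      rw [Finset.prod_mul_distrib, Finset.prod_pow_eq_pow_sum, hst]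
    have h5 : (P / (2:ℝ)^t) ^ r * ((2:ℝ)^t * P) ^ (-r) = (2:ℝ) ^ (-(2 * r * (t:ℝ))) := by
      have e1 : P / (2:ℝ)^t = (2:ℝ) ^ (-(2*(t:ℝ))) * ((2:ℝ)^t * P) := by
        rw [← Real.rpow_natCast 2 t, ← mul_assoc,
          ← Real.rpow_add (by norm_num : (0:ℝ) < 2),
          show -(2*(t:ℝ)) + (t:ℝ) = -(t:ℝ) by ring,
          div_eq_mul_inv, Real.rpow_neg (by norm_num : (0:ℝ) ≤ 2)]
        ring
      rw [e1, Real.mul_rpow (by positivity) (by positivity), mul_assoc,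
        ← Real.rpow_add (by positivity : (0:ℝ) < (2:ℝ)^t * P),
        add_neg_cancel, Real.rpow_zero, mul_one,
        ← Real.rpow_mul (by norm_num : (0:ℝ) ≤ 2)]
      congr 1
      ring
    calc (P / 2^t) ^ r * ∏ j, (min ((2 ^ s j * u j) ^ (r / 2)) ((2 ^ s j * u j) ^ (-(r / 2))))^2
        ≤ (P / 2^t) ^ r * ∏ j, ((2 ^ s j * u j) ^ (-r) * ((4:ℝ)⁻¹)^(m j - s j)) := by
          apply mul_le_mul_of_nonneg_left h3 (by positivity)
      _ = (P / 2^t) ^ r * (((2:ℝ)^t * P) ^ (-r) * ∏ j, ((4:ℝ)⁻¹)^(m j - s j)) := by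
          rw [Finset.prod_mul_distrib, h4]
      _ = (2:ℝ) ^ (-(2 * r * (t:ℝ))) * ∏ j, ((4:ℝ)⁻¹)^(m j - s j) := by
          rw [← mul_assoc, h5]
  -- assemble
  have hrp0 : (0:ℝ) < (2:ℝ) ^ (-(2 * r * (t:ℝ))) := Real.rpow_pos_of_pos (by norm_num) _
  calc ∑ s ∈ Finset.Nat.antidiagonalTuple d t,
        ((P / 2 ^ (∑ j, s j)) ^ (r / 2) *
          ∏ j, min ((2 ^ s j * u j) ^ (r / 2)) ((2 ^ s j * u j) ^ (-(r / 2)))) ^ 2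
      ≤ ∑ s ∈ Finset.Nat.antidiagonalTuple d t,
          (2:ℝ) ^ (-(2 * r * (t:ℝ))) * ∏ j, ((4:ℝ)⁻¹)^(m j - s j) :=
        Finset.sum_le_sum hterm
    _ = (2:ℝ) ^ (-(2 * r * (t:ℝ))) *
          ∑ s ∈ Finset.Nat.antidiagonalTuple d t, ∏ j, ((4:ℝ)⁻¹)^(m j - s j) := by
        rw [Finset.mul_sum]
    _ ≤ (2:ℝ) ^ (-(2 * r * (t:ℝ))) *
          (C * ((2:ℝ)⁻¹)^((∑ j, m j) - t) * (((t - ∑ j, m j : ℕ):ℝ)+1)^(d-1)) :=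
        mul_le_mul_of_nonneg_left (hCb m t) hrp0.le
    _ ≤ (2:ℝ) ^ (-(2 * r * (t:ℝ))) * (C * 1 * ((((d:ℝ)+2)/Real.log 2) * L)^(d-1)) := by
        apply mul_le_mul_of_nonneg_left _ hrp0.le
        apply mul_le_mul
        · apply mul_le_mul_of_nonneg_left _ hC.le
          exact pow_le_one₀ (by norm_num) (by norm_num)
        · exact pow_le_pow_left₀ (by positivity) hcount _
        · positivity
        · nlinarith
    _ = C * (((d:ℝ)+2)/Real.log 2)^(d-1) * (2:ℝ) ^ (-(2 * r * (t:ℝ))) * L^(d-1) := by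
        rw [mul_pow]
        ring

end
end

section
/- Let m ∈ ℕ, a ∈ ℤ^d, and suppose Γ(L,d) ∩ (L(m,a) \ {0}) = ∅ for some L ≥ 2, where L(m,a) = {k ∈ ℤ^d : (a,k) ≡ 0 (mod m)}. Let t_0 be the smallest natural number with 2^{t_0} > L. Then there is a constant C_2 (depending only on d) such that for every t ≥ t_0 and every s ∈ ℕ_0^d with ‖s‖_1 = t, the dyadic block ρ(s) = {k ∈ ℤ^d : [2^{s_j − 1}] ≤ |k_j| < 2^{s_j} for j = 1,…,d} satisfies #(ρ(s) ∩ L(m,a)) ≤ C_2 · 2^{t − t_0}. -/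
open MeasureTheory Real

noncomputable section

private lemma exists_le_sum (d : ℕ) (s : Fin d → ℕ) :
    ∀ u : ℕ, u ≤ ∑ j, s j → ∃ c : Fin d → ℕ, (∀ j, c j ≤ s j) ∧ ∑ j, c j = u := by
  intro u
  induction u with
  | zero => exact fun _ => ⟨fun _ => 0, fun j => Nat.zero_le _, by simp⟩
  | succ n ih =>
    intro h
    obtain ⟨c, hc, hcs⟩ := ih (Nat.le_of_succ_le h)
    have hex : ∃ j, c j < s j := by
      by_contra hno
      push_neg at hno
      have : ∑ j, s j ≤ ∑ j, c j := Finset.sum_le_sum fun j _ => hno j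
      omega
    obtain ⟨j, hj⟩ := hex
    refine ⟨Function.update c j (c j + 1), ?_, ?_⟩
    · intro i
      rcases eq_or_ne i j with rfl | hij
      · simpa using hj
      · simp [Function.update_of_ne hij, hc i]
    · rw [Finset.sum_update_of_mem (Finset.mem_univ j)]
      have h2 : ∑ i, c i = c j + ∑ i ∈ Finset.univ \ {j}, c i := by
        rw [Finset.sum_eq_add_sum_sdiff_singleton_of_mem (Finset.mem_univ j) c]
      omega

/-- The number of points of the lattice `L(m,a)` in a dyadic block `ρ(s)` with
`‖s‖₁ = t ≥ t₀` is at most `C₂ 2^{t - t₀}`, where `t₀` is the smallest natural number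
with `2^{t₀} > L` and `Γ(L,d) ∩ (L(m,a) \ {0}) = ∅`. -/
theorem dyadic_block_lattice_count (d : ℕ) (hd : 1 ≤ d) :
    ∃ C₂ : ℝ, 0 < C₂ ∧
      ∀ m : ℕ, 0 < m → ∀ a : Fin d → ℤ, ∀ L : ℕ, 2 ≤ L →
        (∀ k ∈ hyperbolicCross d (L : ℝ), k ≠ 0 → ¬ ((m : ℤ) ∣ ∑ j, a j * k j)) →
        ∀ t₀ : ℕ, L < 2 ^ t₀ → (∀ t' : ℕ, L < 2 ^ t' → t₀ ≤ t') →
          ∀ t : ℕ, t₀ ≤ t → ∀ s : Fin d → ℕ, ∑ j, s j = t →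
            (({k : Fin d → ℤ |
                  ∀ j, ((2 ^ s j / 2 : ℕ) : ℤ) ≤ |k j| ∧ |k j| < 2 ^ s j} ∩
                {k : Fin d → ℤ | (m : ℤ) ∣ ∑ j, a j * k j}).ncard : ℝ) ≤
              C₂ * 2 ^ (t - t₀) := by
  refine ⟨2 ^ (d + 1), by positivity, ?_⟩
  intro m hm a L hL hcross t₀ ht₀ ht₀min t ht s hs
  have ht₀2 : 2 ≤ t₀ := by
    by_contra hcon
    push_neg at hcon
    have h1 : (2:ℕ) ^ t₀ ≤ 2 ^ 1 := Nat.pow_le_pow_right (by norm_num) (by omega)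
    norm_num at h1
    omega
  have hLle : 2 ^ (t₀ - 1) ≤ L := by
    by_contra hcon
    push_neg at hcon
    have := ht₀min (t₀ - 1) hcon
    omega
  obtain ⟨c, hc, hcsum⟩ := exists_le_sum d s (t₀ - 1) (by rw [hs]; omega)
  set S : Set (Fin d → ℤ) :=
    ({k : Fin d → ℤ | ∀ j, ((2 ^ s j / 2 : ℕ) : ℤ) ≤ |k j| ∧ |k j| < 2 ^ s j} ∩
      {k : Fin d → ℤ | (m : ℤ) ∣ ∑ j, a j * k j}) with hSdef
  set f : (Fin d → ℤ) → (Fin d → ℤ) := fun k j => (k j + 2 ^ s j) / 2 ^ c j with hfdef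
  -- injectivity on S
  have hinj : Set.InjOn f S := by
    intro k hk k' hk' heq
    by_contra hne
    have hdvd : (m : ℤ) ∣ ∑ j, a j * (k j - k' j) := by
      have h1 := hk.2
      have h2 := hk'.2
      simpa [mul_sub, Finset.sum_sub_distrib] using dvd_sub h1 h2
    have hsmall : ∀ j, |k j - k' j| < 2 ^ c j := by
      intro j
      have hq : (k j + 2 ^ s j) / 2 ^ c j = (k' j + 2 ^ s j) / 2 ^ c j := congrFun heq j
      have hn : (0:ℤ) < 2 ^ c j := by positivity
      have e1 := Int.mul_ediv_add_emod (k j + 2 ^ s j) (2 ^ c j)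
      have e2 := Int.mul_ediv_add_emod (k' j + 2 ^ s j) (2 ^ c j)
      have r1 := Int.emod_nonneg (k j + 2 ^ s j) (ne_of_gt hn)
      have r2 := Int.emod_nonneg (k' j + 2 ^ s j) (ne_of_gt hn)
      have l1 := Int.emod_lt_of_pos (k j + 2 ^ s j) hn
      have l2 := Int.emod_lt_of_pos (k' j + 2 ^ s j) hn
      rw [hq] at e1
      have key : k j - k' j =
          (k j + 2 ^ s j) % 2 ^ c j - (k' j + 2 ^ s j) % 2 ^ c j := by linarith
      rw [key, abs_lt]
      omega
    have hmem : (fun j => k j - k' j) ∈ hyperbolicCross d (L : ℝ) := by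
      have step : ∀ j, max |((k j - k' j : ℤ) : ℝ)| 1 ≤ (2:ℝ) ^ c j := by
        intro j
        refine max_le ?_ (one_le_pow₀ (by norm_num))
        exact_mod_cast (hsmall j).le
      calc (∏ j, max |((k j - k' j : ℤ) : ℝ)| 1)
          ≤ ∏ j, (2:ℝ) ^ c j :=
            Finset.prod_le_prod
              (fun j _ => le_trans zero_le_one (le_max_right _ _))
              (fun j _ => step j)
        _ = (2:ℝ) ^ (∑ j, c j) := by rw [Finset.prod_pow_eq_pow_sum]
        _ = (2:ℝ) ^ (t₀ - 1) := by rw [hcsum]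
        _ ≤ (L : ℝ) := by exact_mod_cast hLle
    have hne0 : (fun j => k j - k' j) ≠ (0 : Fin d → ℤ) := by
      intro h0
      apply hne
      funext j
      have := congrFun h0 j
      simpa [sub_eq_zero] using this
    exact hcross _ hmem hne0 hdvd
  -- range of f on S
  have hmaps : ∀ k ∈ S, ∀ j, 0 ≤ f k j ∧ f k j < ((2 ^ (s j + 1 - c j) : ℕ) : ℤ) := by
    intro k hk j
    have hb := (hk.1 j).2
    have hab := abs_lt.mp hb
    have hlow : (0:ℤ) ≤ k j + 2 ^ s j := by omega
    have hn : (0:ℤ) < 2 ^ c j := by positivity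
    constructor
    · exact Int.ediv_nonneg hlow hn.le
    · have : f k j < 2 ^ (s j + 1 - c j) := by
        rw [hfdef]
        simp only
        rw [Int.ediv_lt_iff_lt_mul hn]
        have hpow : (2:ℤ) ^ (s j + 1 - c j) * 2 ^ c j = 2 ^ (s j + 1) := by
          rw [← pow_add]
          congr 1
          have := hc j
          omega
        rw [hpow]
        have h2 : (2:ℤ) ^ (s j + 1) = 2 ^ s j * 2 := pow_succ 2 (s j)
        omega
      exact_mod_cast this
  set T : Finset (Fin d → ℤ) :=
    Fintype.piFinset fun j => Finset.Ico (0:ℤ) ((2 ^ (s j + 1 - c j) : ℕ) : ℤ) with hTdef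
  have himg : f '' S ⊆ ↑T := by
    rintro _ ⟨k, hk, rfl⟩
    rw [Finset.mem_coe, Fintype.mem_piFinset]
    intro j
    rw [Finset.mem_Ico]
    exact hmaps k hk j
  have hcardT : T.card = ∏ j, 2 ^ (s j + 1 - c j) := by
    rw [hTdef, Fintype.card_piFinset]
    simp only [Int.card_Ico, sub_zero, Int.toNat_natCast]
  have hEsum : ∑ j, (s j + 1 - c j) = d + 1 + (t - t₀) := by
    have h1 : ∑ j, ((s j + 1 - c j) + c j) = ∑ j, (s j + 1) := by
      refine Finset.sum_congr rfl fun j _ => ?_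
      have := hc j
      omega
    rw [Finset.sum_add_distrib] at h1
    have h2 : ∑ j, (s j + 1) = t + d := by
      rw [Finset.sum_add_distrib, hs]
      simp
    omega
  have hfin : (f '' S).Finite := T.finite_toSet.subset himg
  have hSfin : S.Finite := Set.Finite.of_finite_image hfin hinj
  have h1 : S.ncard = (f '' S).ncard := (Set.ncard_image_of_injOn hinj).symm
  have h2 : (f '' S).ncard ≤ T.card := by
    rw [← Set.ncard_coe_finset]
    exact Set.ncard_le_ncard himg T.finite_toSet
  have h3 : S.ncard ≤ 2 ^ (d + 1) * 2 ^ (t - t₀) := by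
    rw [h1]
    calc (f '' S).ncard ≤ T.card := h2
      _ = ∏ j, 2 ^ (s j + 1 - c j) := hcardT
      _ = 2 ^ (∑ j, (s j + 1 - c j)) := by rw [Finset.prod_pow_eq_pow_sum]
      _ = 2 ^ (d + 1 + (t - t₀)) := by rw [hEsum]
      _ = 2 ^ (d + 1) * 2 ^ (t - t₀) := pow_add 2 _ _
  calc (S.ncard : ℝ) ≤ ((2 ^ (d + 1) * 2 ^ (t - t₀) : ℕ) : ℝ) := by exact_mod_cast h3
    _ = 2 ^ (d + 1) * 2 ^ (t - t₀) := by push_cast; ring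

end
end
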